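/- arXiv:1712.02023 — 12 statements merged into one kernel-verified Lean document; each statement's English description precedes it below -/
import Mathlib

section
/- Let D = (P, 𝓑) be a 2-(v,k,λ) design with b blocks and with r blocks through each point, and let G be the incidence graph of D. Then for every positive integer m and every subset X ⊆ P, the neighbourhood N(X) of X in G (i.e., the set of blocks containing at least one point of X) satisfies |N(X)| ≥ (2rm − λ(|X|−1))·|X| / (m(m+1)). -/
open Finset

/-- A 2-(v,k,λ) design with `b` blocks and `r` blocks through each point:
points form a finset `points` of size `v`, blocks a finset `blocks` of
`k`-element subsets of `points`, every pair of distinct points lying in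
exactly `lam` blocks, where `v > k > lam ≥ 1`. -/
structure TwoDesign (α : Type*) [DecidableEq α] where
  v : ℕ
  b : ℕ
  r : ℕ
  k : ℕ
  lam : ℕ
  points : Finset α
  blocks : Finset (Finset α)
  lam_pos : 0 < lam
  lam_lt_k : lam < k
  k_lt_v : k < v
  card_points : points.card = v
  card_blocks : blocks.card = b
  block_subset : ∀ B ∈ blocks, B ⊆ points
  card_block : ∀ B ∈ blocks, B.card = k
  pair_count : ∀ p ∈ points, ∀ q ∈ points, p ≠ q →
    (blocks.filter fun B => p ∈ B ∧ q ∈ B).card = lam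
  point_count : ∀ p ∈ points, (blocks.filter fun B => p ∈ B).card = r

variable {α : Type*} [DecidableEq α]

/-- In the incidence graph, the neighbourhood of a set `X` of points:
the blocks containing at least one point of `X`. -/
def TwoDesign.blockNbhd (D : TwoDesign α) (X : Finset α) : Finset (Finset α) :=
  D.blocks.filter fun B => ∃ p ∈ X, p ∈ B

/-- In the incidence graph, the neighbourhood of a set `Y` of blocks:
the points lying on at least one block of `Y`. -/
def TwoDesign.pointNbhd (D : TwoDesign α) (Y : Finset (Finset α)) : Finset α :=
  D.points.filter fun p => ∃ B ∈ Y, p ∈ B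


lemma consec_nonneg (t : ℤ) : 0 ≤ t * (t + 1) := by
  rcases le_or_gt 0 t with h | h
  · exact mul_nonneg h (by linarith)
  · nlinarith

lemma sumA (D : TwoDesign α) (X : Finset α) (hX : X ⊆ D.points) :
    ∑ B ∈ D.blocks, (X ∩ B).card = D.r * X.card := by
  have h1 : ∀ B : Finset α, (X ∩ B).card = ∑ p ∈ X, if p ∈ B then 1 else 0 := by
    intro B
    rw [← Finset.filter_mem_eq_inter, Finset.card_filter]
  calc ∑ B ∈ D.blocks, (X ∩ B).card
      = ∑ B ∈ D.blocks, ∑ p ∈ X, if p ∈ B then 1 else 0 := by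
        simp only [h1]
    _ = ∑ p ∈ X, ∑ B ∈ D.blocks, if p ∈ B then 1 else 0 := Finset.sum_comm
    _ = ∑ p ∈ X, D.r := by
        refine Finset.sum_congr rfl fun p hp => ?_
        rw [← Finset.card_filter]
        exact D.point_count p (hX hp)
    _ = D.r * X.card := by rw [Finset.sum_const, smul_eq_mul, mul_comm]

lemma sumB (D : TwoDesign α) (X : Finset α) (hX : X ⊆ D.points) :
    ∑ B ∈ D.blocks, (X ∩ B).offDiag.card = D.lam * X.offDiag.card := by
  have h0 : ∀ B : Finset α, (X ∩ B).offDiag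
      = X.offDiag.filter (fun pq => pq.1 ∈ B ∧ pq.2 ∈ B) := by
    intro B
    ext ⟨p, q⟩
    simp only [Finset.mem_offDiag, Finset.mem_filter, Finset.mem_inter]
    tauto
  have h1 : ∀ B : Finset α, (X ∩ B).offDiag.card
      = ∑ pq ∈ X.offDiag, if pq.1 ∈ B ∧ pq.2 ∈ B then 1 else 0 := by
    intro B
    rw [h0, Finset.card_filter]
  calc ∑ B ∈ D.blocks, (X ∩ B).offDiag.card
      = ∑ B ∈ D.blocks, ∑ pq ∈ X.offDiag, if pq.1 ∈ B ∧ pq.2 ∈ B then 1 else 0 := by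
        simp only [h1]
    _ = ∑ pq ∈ X.offDiag, ∑ B ∈ D.blocks, if pq.1 ∈ B ∧ pq.2 ∈ B then 1 else 0 :=
        Finset.sum_comm
    _ = ∑ pq ∈ X.offDiag, D.lam := by
        refine Finset.sum_congr rfl fun pq hpq => ?_
        rw [Finset.mem_offDiag] at hpq
        rw [← Finset.card_filter]
        exact D.pair_count pq.1 (hX hpq.1) pq.2 (hX hpq.2.1) hpq.2.2
    _ = D.lam * X.offDiag.card := by rw [Finset.sum_const, smul_eq_mul, mul_comm]

lemma master (D : TwoDesign α) (m : ℕ) (X : Finset α) (hX : X ⊆ D.points) :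
    2 * m * (D.r * X.card)
      ≤ m * (m + 1) * (D.blockNbhd X).card + D.lam * X.offDiag.card := by
  rw [← sumA D X hX, ← sumB D X hX]
  have hN : (D.blockNbhd X).card
      = ∑ B ∈ D.blocks, if ∃ p ∈ X, p ∈ B then 1 else 0 := by
    rw [TwoDesign.blockNbhd, Finset.card_filter]
  rw [hN, Finset.mul_sum, Finset.mul_sum, ← Finset.sum_add_distrib]
  refine Finset.sum_le_sum fun B _ => ?_
  by_cases h : ∃ p ∈ X, p ∈ B
  · simp only [h, if_true, mul_one]
    have hle : (X ∩ B).card ≤ (X ∩ B).card * (X ∩ B).card := by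
      rcases Nat.eq_zero_or_pos (X ∩ B).card with h0 | h0
      · simp [h0]
      · exact Nat.le_mul_of_pos_left _ h0
    rw [Finset.offDiag_card]
    zify [hle]
    nlinarith [consec_nonneg ((m : ℤ) - (X ∩ B).card)]
  · have he : X ∩ B = ∅ := by
      ext p
      simp only [Finset.mem_inter, Finset.notMem_empty, iff_false]
      rintro ⟨hp, hb⟩
      exact h ⟨p, hp, hb⟩
    simp [he, h]

theorem neighbourhood_lower_bound_m (D : TwoDesign α) (m : ℕ) (hm : 0 < m)
    (X : Finset α) (hX : X ⊆ D.points) :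
    (((D.blockNbhd X).card : ℝ)) ≥
      (2 * (D.r : ℝ) * (m : ℝ) - (D.lam : ℝ) * ((X.card : ℝ) - 1)) * (X.card : ℝ) /
        ((m : ℝ) * ((m : ℝ) + 1)) := by
  rcases Finset.eq_empty_or_nonempty X with rfl | hne
  · simp
  · have hn1 : 1 ≤ X.card := Finset.card_pos.mpr hne
    have H := master D m X hX
    rw [Finset.offDiag_card] at H
    have hle : X.card ≤ X.card * X.card := Nat.le_mul_of_pos_left _ hn1
    have HR : (2 * (m : ℝ) * ((D.r : ℝ) * (X.card : ℝ)))
        ≤ (m : ℝ) * ((m : ℝ) + 1) * ((D.blockNbhd X).card : ℝ)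
          + (D.lam : ℝ) * ((X.card : ℝ) * (X.card : ℝ) - (X.card : ℝ)) := by
      have := (Nat.cast_le (α := ℝ)).mpr H
      push_cast [Nat.cast_sub hle] at this
      linarith
    have hmpos : (0 : ℝ) < (m : ℝ) := by exact_mod_cast hm
    rw [ge_iff_le, div_le_iff₀ (by positivity)]
    nlinarith [HR]
end

section
/- Let D = (P, 𝓑) be a 2-(v,k,λ) design with b blocks and with r blocks through each point, and let G be the incidence graph of D. Let m be a positive integer and X ⊆ P. If every block B ∈ N(X) satisfies |B ∩ X| ∈ {m, m+1}, then |N(X)| = (2rm − λ(|X|−1))·|X| / (m(m+1)). -/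
open Finset

variable {α : Type*} [DecidableEq α]

private lemma card_inter_sum (B X : Finset α) :
    (B ∩ X).card = ∑ p ∈ X, if p ∈ B then 1 else 0 := by
  rw [inter_comm, ← filter_mem_eq_inter, card_filter]

private lemma sum_nbhd_eq_sum_blocks (D : TwoDesign α) (X : Finset α) (f : Finset α → ℕ)
    (hf : ∀ B, B ∩ X = ∅ → f B = 0) :
    ∑ B ∈ D.blockNbhd X, f B = ∑ B ∈ D.blocks, f B := by
  apply sum_filter_of_ne
  intro B hB h
  by_contra hcon
  have : B ∩ X = ∅ := by
    rw [eq_empty_iff_forall_notMem]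
    intro p hp
    rw [mem_inter] at hp
    exact hcon ⟨p, hp.2, hp.1⟩
  exact h (hf B this)

private lemma sum_card_inter (D : TwoDesign α) (X : Finset α) (hX : X ⊆ D.points) :
    ∑ B ∈ D.blockNbhd X, (B ∩ X).card = D.r * X.card := by
  rw [sum_nbhd_eq_sum_blocks D X (fun B => (B ∩ X).card) (fun B h => by simp [h])]
  calc ∑ B ∈ D.blocks, (B ∩ X).card
      = ∑ B ∈ D.blocks, ∑ p ∈ X, if p ∈ B then 1 else 0 := by
        exact sum_congr rfl fun B _ => card_inter_sum B X
    _ = ∑ p ∈ X, ∑ B ∈ D.blocks, if p ∈ B then 1 else 0 := sum_comm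
    _ = ∑ p ∈ X, (D.blocks.filter fun B => p ∈ B).card := by
        exact sum_congr rfl fun p _ => (card_filter _ _).symm
    _ = ∑ p ∈ X, D.r := sum_congr rfl fun p hp => D.point_count p (hX hp)
    _ = D.r * X.card := by rw [sum_const, smul_eq_mul, mul_comm]

private lemma sum_card_inter_sq (D : TwoDesign α) (X : Finset α) (hX : X ⊆ D.points) :
    (∑ B ∈ D.blockNbhd X, (B ∩ X).card ^ 2) + D.lam * X.card
      = D.r * X.card + D.lam * X.card ^ 2 := by
  rw [sum_nbhd_eq_sum_blocks D X (fun B => (B ∩ X).card ^ 2) (fun B h => by simp [h])]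
  have key : ∑ B ∈ D.blocks, (B ∩ X).card ^ 2
      = ∑ p ∈ X, ∑ q ∈ X, ((D.blocks.filter fun B => p ∈ B ∧ q ∈ B).card) := by
    calc ∑ B ∈ D.blocks, (B ∩ X).card ^ 2
        = ∑ B ∈ D.blocks, ∑ p ∈ X, ∑ q ∈ X, if p ∈ B ∧ q ∈ B then 1 else 0 := by
          refine sum_congr rfl fun B _ => ?_
          rw [card_inter_sum B X, sq, sum_mul_sum]
          refine sum_congr rfl fun p _ => sum_congr rfl fun q _ => ?_
          split_ifs <;> simp_all
      _ = ∑ p ∈ X, ∑ q ∈ X, ∑ B ∈ D.blocks, if p ∈ B ∧ q ∈ B then 1 else 0 := by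
          rw [sum_comm]
          exact sum_congr rfl fun p _ => sum_comm
      _ = ∑ p ∈ X, ∑ q ∈ X, ((D.blocks.filter fun B => p ∈ B ∧ q ∈ B).card) := by
          exact sum_congr rfl fun p _ => sum_congr rfl fun q _ => (card_filter _ _).symm
  rw [key]
  have inner : ∀ p ∈ X,
      (∑ q ∈ X, ((D.blocks.filter fun B => p ∈ B ∧ q ∈ B).card)) + D.lam
        = D.r + D.lam * X.card := by
    intro p hp
    have h1 : ∑ q ∈ X.erase p, ((D.blocks.filter fun B => p ∈ B ∧ q ∈ B).card)
        + ((D.blocks.filter fun B => p ∈ B ∧ p ∈ B).card)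
        = ∑ q ∈ X, ((D.blocks.filter fun B => p ∈ B ∧ q ∈ B).card) :=
      sum_erase_add X _ hp
    have h2 : ((D.blocks.filter fun B => p ∈ B ∧ p ∈ B) : Finset (Finset α)).card = D.r := by
      rw [← D.point_count p (hX hp)]
      congr 1
      exact filter_congr fun B _ => by simp
    have h3 : ∑ q ∈ X.erase p, ((D.blocks.filter fun B => p ∈ B ∧ q ∈ B).card)
        = D.lam * (X.card - 1) := by
      rw [Finset.sum_congr rfl fun q hq =>
        D.pair_count p (hX hp) q (hX (mem_of_mem_erase hq)) (ne_of_mem_erase hq).symm]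
      rw [sum_const, smul_eq_mul, card_erase_of_mem hp, mul_comm]
    have hcard : 1 ≤ X.card := card_pos.mpr ⟨p, hp⟩
    rw [← h1, h2, h3]
    have : D.lam * (X.card - 1) + D.lam = D.lam * X.card := by
      rw [← Nat.mul_succ]
      congr 1
      omega
    omega
  calc (∑ p ∈ X, ∑ q ∈ X, ((D.blocks.filter fun B => p ∈ B ∧ q ∈ B).card)) + D.lam * X.card
      = ∑ p ∈ X, ((∑ q ∈ X, ((D.blocks.filter fun B => p ∈ B ∧ q ∈ B).card)) + D.lam) := by
        rw [sum_add_distrib, sum_const, smul_eq_mul, mul_comm]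
    _ = ∑ p ∈ X, (D.r + D.lam * X.card) := sum_congr rfl inner
    _ = D.r * X.card + D.lam * X.card ^ 2 := by
        rw [sum_const, smul_eq_mul]
        ring

theorem neighbourhood_equality_case (D : TwoDesign α) (m : ℕ) (hm : 0 < m)
    (X : Finset α) (hX : X ⊆ D.points)
    (hmm : ∀ B ∈ D.blockNbhd X, (B ∩ X).card = m ∨ (B ∩ X).card = m + 1) :
    (((D.blockNbhd X).card : ℝ)) =
      (2 * (D.r : ℝ) * (m : ℝ) - (D.lam : ℝ) * ((X.card : ℝ) - 1)) * (X.card : ℝ) /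
        ((m : ℝ) * ((m : ℝ) + 1)) := by
  set S1 : ℝ := ∑ B ∈ D.blockNbhd X, ((B ∩ X).card : ℝ) with hS1def
  set S2 : ℝ := ∑ B ∈ D.blockNbhd X, ((B ∩ X).card : ℝ) ^ 2 with hS2def
  have E1 : S1 = (D.r : ℝ) * X.card := by
    rw [hS1def, ← Nat.cast_sum]
    rw [sum_card_inter D X hX]
    push_cast; ring
  have E2 : S2 + (D.lam : ℝ) * X.card = (D.r : ℝ) * X.card + (D.lam : ℝ) * (X.card : ℝ) ^ 2 := by
    have := sum_card_inter_sq D X hX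
    have hcast := congrArg (Nat.cast : ℕ → ℝ) this
    push_cast at hcast
    rw [hS2def]
    convert hcast using 2
  have E3 : S2 + ((m : ℝ) * ((m : ℝ) + 1)) * ((D.blockNbhd X).card : ℝ)
      = (2 * (m : ℝ) + 1) * S1 := by
    have h : ∀ B ∈ D.blockNbhd X,
        (((B ∩ X).card : ℝ)) ^ 2 + (m : ℝ) * ((m : ℝ) + 1)
          = (2 * (m : ℝ) + 1) * ((B ∩ X).card : ℝ) := by
      intro B hB
      rcases hmm B hB with h | h <;> rw [h] <;> push_cast <;> ring
    calc S2 + ((m : ℝ) * ((m : ℝ) + 1)) * ((D.blockNbhd X).card : ℝ)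
        = ∑ B ∈ D.blockNbhd X, ((((B ∩ X).card : ℝ)) ^ 2 + (m : ℝ) * ((m : ℝ) + 1)) := by
          rw [hS2def, sum_add_distrib, sum_const, nsmul_eq_mul]; ring
      _ = ∑ B ∈ D.blockNbhd X, (2 * (m : ℝ) + 1) * ((B ∩ X).card : ℝ) := sum_congr rfl h
      _ = (2 * (m : ℝ) + 1) * S1 := by rw [hS1def, mul_sum]
  have hm' : (0 : ℝ) < (m : ℝ) * ((m : ℝ) + 1) := by positivity
  rw [eq_div_iff (ne_of_gt hm')]
  linear_combination E3 - E2 + (2 * (m : ℝ) + 1) * E1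
end

section
/- Let D = (P, 𝓑) be a 2-(v,k,λ) design with b blocks and with r blocks through each point, and let G be the incidence graph of D. Then for every subset X ⊆ P, |N(X)| ≥ r²·|X| / (r + λ(|X|−1)). -/
open Finset

variable {α : Type*} [DecidableEq α]

theorem neighbourhood_lower_bound_points (D : TwoDesign α)
    (X : Finset α) (hX : X ⊆ D.points) :
    (((D.blockNbhd X).card : ℝ)) ≥
      (D.r : ℝ) ^ 2 * (X.card : ℝ) / ((D.r : ℝ) + (D.lam : ℝ) * ((X.card : ℝ) - 1)) := by
  classical
  set N := D.blockNbhd X with hN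
  -- elements of blocks outside N meet X trivially
  have hzero : ∀ B ∈ D.blocks, B ∉ N → (B ∩ X).card = 0 := by
    intro B hB hBN
    simp only [hN, TwoDesign.blockNbhd, Finset.mem_filter, hB, true_and, not_exists] at hBN
    rw [Finset.card_eq_zero, Finset.eq_empty_iff_forall_notMem]
    intro p hp
    rcases Finset.mem_inter.mp hp with ⟨hpB, hpX⟩
    exact hBN p ⟨hpX, hpB⟩
  have hsub : N ⊆ D.blocks := Finset.filter_subset _ _
  have hcard : ∀ B : Finset α, (B ∩ X).card = ∑ p ∈ X, if p ∈ B then 1 else 0 := by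
    intro B
    rw [Finset.inter_comm, ← Finset.filter_mem_eq_inter, Finset.card_filter]
  -- first moment
  have hsum1 : ∑ B ∈ N, (B ∩ X).card = X.card * D.r := by
    rw [Finset.sum_subset hsub (fun B hB hBN => hzero B hB hBN)]
    calc ∑ B ∈ D.blocks, (B ∩ X).card
        = ∑ B ∈ D.blocks, ∑ p ∈ X, if p ∈ B then 1 else 0 := by
          exact Finset.sum_congr rfl fun B _ => hcard B
      _ = ∑ p ∈ X, ∑ B ∈ D.blocks, if p ∈ B then 1 else 0 := Finset.sum_comm
      _ = ∑ p ∈ X, (D.blocks.filter fun B => p ∈ B).card := by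
          exact Finset.sum_congr rfl fun p _ => (Finset.card_filter _ _).symm
      _ = ∑ p ∈ X, D.r := Finset.sum_congr rfl fun p hp => D.point_count p (hX hp)
      _ = X.card * D.r := by rw [Finset.sum_const, smul_eq_mul]
  -- second moment
  have hsum2 : ∑ B ∈ N, (B ∩ X).card ^ 2 = X.card * (D.r + (X.card - 1) * D.lam) := by
    rw [Finset.sum_subset hsub (fun B hB hBN => by rw [hzero B hB hBN]; ring)]
    have step : ∀ B : Finset α, (B ∩ X).card ^ 2 =
        ∑ p ∈ X, ∑ q ∈ X, if p ∈ B ∧ q ∈ B then 1 else 0 := by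
      intro B
      rw [hcard B, sq, Finset.sum_mul_sum]
      refine Finset.sum_congr rfl fun p _ => Finset.sum_congr rfl fun q _ => ?_
      split_ifs with h1 h2 h3 <;> simp_all
    calc ∑ B ∈ D.blocks, (B ∩ X).card ^ 2
        = ∑ B ∈ D.blocks, ∑ p ∈ X, ∑ q ∈ X, if p ∈ B ∧ q ∈ B then 1 else 0 := by
          exact Finset.sum_congr rfl fun B _ => step B
      _ = ∑ p ∈ X, ∑ q ∈ X, ∑ B ∈ D.blocks, if p ∈ B ∧ q ∈ B then 1 else 0 := by
          rw [Finset.sum_comm]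
          exact Finset.sum_congr rfl fun p _ => Finset.sum_comm
      _ = ∑ p ∈ X, ∑ q ∈ X, (D.blocks.filter fun B => p ∈ B ∧ q ∈ B).card := by
          exact Finset.sum_congr rfl fun p _ => Finset.sum_congr rfl fun q _ =>
            (Finset.card_filter _ _).symm
      _ = ∑ p ∈ X, (D.r + (X.card - 1) * D.lam) := by
          refine Finset.sum_congr rfl fun p hp => ?_
          rw [← Finset.add_sum_erase _ _ hp]
          congr 1
          · have : (D.blocks.filter fun B => p ∈ B ∧ p ∈ B)
                = D.blocks.filter fun B => p ∈ B := by
              apply Finset.filter_congr; intro B _; simp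
            rw [this, D.point_count p (hX hp)]
          · have : ∀ q ∈ X.erase p,
                (D.blocks.filter fun B => p ∈ B ∧ q ∈ B).card = D.lam := by
              intro q hq
              exact D.pair_count p (hX hp) q (hX (Finset.mem_of_mem_erase hq))
                (Ne.symm (Finset.ne_of_mem_erase hq))
            rw [Finset.sum_congr rfl this, Finset.sum_const, smul_eq_mul,
              Finset.card_erase_of_mem hp]
      _ = X.card * (D.r + (X.card - 1) * D.lam) := by
          rw [Finset.sum_const, smul_eq_mul]
  rcases Finset.eq_empty_or_nonempty X with hXe | hXne
  · simp [hXe]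
  · have hn1 : 1 ≤ X.card := Finset.card_pos.mpr hXne
    set n : ℝ := (X.card : ℝ) with hnn
    have hnpos : 0 < n := by positivity
    have hn1' : (1 : ℝ) ≤ n := by rw [hnn]; exact_mod_cast hn1
    set d : ℝ := (D.r : ℝ) + (D.lam : ℝ) * (n - 1) with hd
    have hdnn : 0 ≤ d := by
      have : (0:ℝ) ≤ (D.lam : ℝ) * (n - 1) := by
        apply mul_nonneg (by positivity); linarith
      positivity
    rcases eq_or_lt_of_le hdnn with hd0 | hdpos
    · rw [← hd0, div_zero]; positivity
    -- Cauchy-Schwarz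
    have hCS : ((∑ B ∈ N, ((B ∩ X).card : ℝ)))^2 ≤
        (N.card : ℝ) * ∑ B ∈ N, ((B ∩ X).card : ℝ)^2 :=
      sq_sum_le_card_mul_sum_sq
    have e1 : (∑ B ∈ N, ((B ∩ X).card : ℝ)) = n * (D.r : ℝ) := by
      rw [← Nat.cast_sum, hsum1]; push_cast; ring
    have e2 : (∑ B ∈ N, ((B ∩ X).card : ℝ)^2) = n * d := by
      have : (∑ B ∈ N, ((B ∩ X).card : ℝ)^2) =
          ((∑ B ∈ N, (B ∩ X).card ^ 2 : ℕ) : ℝ) := by push_cast; ring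
      rw [this, hsum2]
      have : ((X.card - 1 : ℕ) : ℝ) = n - 1 := by
        rw [Nat.cast_sub hn1]; push_cast; ring
      push_cast [this]
      rw [hd]; ring
    rw [e1, e2] at hCS
    rw [ge_iff_le, div_le_iff₀ hdpos]
    nlinarith [hCS, hnpos, hdpos]
end

section
/- Let D = (P, 𝓑) be a 2-(v,k,λ) design with b blocks and with r blocks through each point, and let G be the incidence graph of D. Then r² > λb, and for every subset Y ⊆ 𝓑, the neighbourhood N(Y) of Y in G (i.e., the set of points lying on at least one block of Y) satisfies |N(Y)| ≥ rk·|Y| / (r² − λ(b − |Y|)). -/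
open Finset

variable {α : Type*} [DecidableEq α]

lemma TwoDesign.sum_inter_card (D : TwoDesign α) (X : Finset α) (hX : X ⊆ D.points) :
    ∑ B ∈ D.blocks, (X ∩ B).card = X.card * D.r := by
  have h1 : ∀ B : Finset α, (X ∩ B).card = ∑ p ∈ X, if p ∈ B then 1 else 0 := by
    intro B
    rw [← Finset.filter_mem_eq_inter, Finset.card_filter]
  simp_rw [h1]
  rw [Finset.sum_comm]
  have h2 : ∀ p ∈ X, (∑ B ∈ D.blocks, if p ∈ B then 1 else 0) = D.r := by
    intro p hp
    rw [← Finset.card_filter]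
    exact D.point_count p (hX hp)
  rw [Finset.sum_congr rfl h2, Finset.sum_const, smul_eq_mul]

lemma TwoDesign.sum_inter_card_sq (D : TwoDesign α) (X : Finset α) (hX : X ⊆ D.points) :
    ∑ B ∈ D.blocks, (X ∩ B).card ^ 2 + D.lam * X.card
      = X.card * D.r + D.lam * X.card ^ 2 := by
  have h1 : ∀ B : Finset α, (X ∩ B).card ^ 2
      = ∑ p ∈ X, ∑ q ∈ X, if p ∈ B ∧ q ∈ B then 1 else 0 := by
    intro B
    rw [← Finset.filter_mem_eq_inter, Finset.card_filter, sq, Finset.sum_mul_sum]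
    congr 1; ext p; congr 1; ext q
    by_cases hp : p ∈ B <;> by_cases hq : q ∈ B <;> simp [hp, hq]
  simp_rw [h1]
  rw [Finset.sum_comm]
  have h2 : ∀ p ∈ X, (∑ B ∈ D.blocks, ∑ q ∈ X, if p ∈ B ∧ q ∈ B then 1 else 0)
      = D.r + D.lam * (X.card - 1) := by
    intro p hp
    rw [Finset.sum_comm]
    have h3 : ∀ q ∈ X, (∑ B ∈ D.blocks, if p ∈ B ∧ q ∈ B then 1 else 0)
        = if q = p then D.r else D.lam := by
      intro q hq
      rw [← Finset.card_filter]
      by_cases hqp : q = p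
      · subst hqp
        rw [if_pos rfl, ← D.point_count q (hX hq)]
        congr 1
        apply Finset.filter_congr
        intro B _; simp
      · rw [if_neg hqp]
        exact D.pair_count p (hX hp) q (hX hq) (fun h => hqp h.symm)
    rw [Finset.sum_congr rfl h3,
      Finset.sum_eq_add_sum_sdiff_singleton_of_mem hp (fun q => if q = p then D.r else D.lam)]
    rw [if_pos rfl]
    have : ∀ q ∈ X \ {p}, (if q = p then D.r else D.lam) = D.lam := by
      intro q hq
      rw [if_neg]
      exact (Finset.mem_sdiff.1 hq).2 ∘ Finset.mem_singleton.2
    rw [Finset.sum_congr rfl this, Finset.sum_const, smul_eq_mul,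
      Finset.card_sdiff_of_subset (Finset.singleton_subset_iff.2 hp), Finset.card_singleton,
      mul_comm]
  rw [Finset.sum_congr rfl h2, Finset.sum_const, smul_eq_mul]
  rcases Finset.eq_empty_or_nonempty X with h | h
  · subst h; simp
  · obtain ⟨t, ht⟩ := Nat.exists_eq_add_of_lt (Finset.card_pos.2 h)
    rw [ht]
    simp only [Nat.add_sub_cancel]
    ring

lemma TwoDesign.bk_eq (D : TwoDesign α) : D.b * D.k = D.v * D.r := by
  have h1 : ∑ B ∈ D.blocks, (D.points ∩ B).card = D.points.card * D.r :=
    D.sum_inter_card _ (Finset.Subset.refl _)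
  have h2 : ∀ B ∈ D.blocks, (D.points ∩ B).card = D.k := by
    intro B hB
    rw [Finset.inter_eq_right.2 (D.block_subset B hB)]
    exact D.card_block B hB
  rw [Finset.sum_congr rfl h2, Finset.sum_const, smul_eq_mul, D.card_blocks,
    D.card_points] at h1
  exact h1

lemma TwoDesign.lam_v (D : TwoDesign α) : D.lam * D.v + D.r = D.r * D.k + D.lam := by
  have hv0 : 0 < D.points.card := by
    rw [D.card_points]
    have := D.k_lt_v; omega
  obtain ⟨p, hp⟩ := Finset.card_pos.1 hv0
  have hpP : p ∈ D.points := hp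
  set Bp := D.blocks.filter (fun B => p ∈ B) with hBpdef
  have hBp : Bp.card = D.r := D.point_count p hpP
  -- count T := ∑_{B ∋ p} |(points \ {p}) ∩ B| two ways
  have way1 : ∑ B ∈ Bp, ((D.points \ {p}) ∩ B).card = D.r * (D.k - 1) := by
    have h2 : ∀ B ∈ Bp, ((D.points \ {p}) ∩ B).card = D.k - 1 := by
      intro B hB
      obtain ⟨hBbl, hpB⟩ := Finset.mem_filter.1 hB
      have he : (D.points \ {p}) ∩ B = B \ {p} := by
        ext q
        simp only [Finset.mem_inter, Finset.mem_sdiff, Finset.mem_singleton]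
        exact ⟨fun h => ⟨h.2, h.1.2⟩, fun h => ⟨⟨D.block_subset B hBbl h.1, h.2⟩, h.1⟩⟩
      rw [he, Finset.card_sdiff_of_subset (Finset.singleton_subset_iff.2 hpB),
        Finset.card_singleton, D.card_block B hBbl]
    rw [Finset.sum_congr rfl h2, Finset.sum_const, smul_eq_mul, hBp]
  have way2 : ∑ B ∈ Bp, ((D.points \ {p}) ∩ B).card = (D.v - 1) * D.lam := by
    have h1 : ∀ B : Finset α, ((D.points \ {p}) ∩ B).card
        = ∑ q ∈ D.points \ {p}, if q ∈ B then 1 else 0 := by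
      intro B
      rw [← Finset.filter_mem_eq_inter, Finset.card_filter]
    simp_rw [h1]
    rw [Finset.sum_comm]
    have h2 : ∀ q ∈ D.points \ {p}, (∑ B ∈ Bp, if q ∈ B then 1 else 0) = D.lam := by
      intro q hq
      obtain ⟨hqP, hqp⟩ := Finset.mem_sdiff.1 hq
      have hqp' : q ≠ p := fun h => hqp (Finset.mem_singleton.2 h)
      rw [← Finset.card_filter, hBpdef, Finset.filter_filter]
      exact D.pair_count p hpP q hqP (fun h => hqp' h.symm)
    rw [Finset.sum_congr rfl h2, Finset.sum_const, smul_eq_mul,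
      Finset.card_sdiff_of_subset (Finset.singleton_subset_iff.2 hp), Finset.card_singleton,
      D.card_points]
  have hT : D.r * (D.k - 1) = (D.v - 1) * D.lam := by rw [← way1, way2]
  have e1 : D.r * (D.k - 1) + D.r * 1 = D.r * D.k := by
    rw [← Nat.mul_add]
    congr 1
    have := D.lam_lt_k; omega
  have e2 : (D.v - 1) * D.lam + 1 * D.lam = D.v * D.lam := by
    rw [← Nat.add_mul]
    congr 1
    have := D.k_lt_v; omega
  have : D.v * D.lam = D.lam * D.v := Nat.mul_comm _ _
  linarith [hT, e1, e2, this]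

lemma TwoDesign.lam_lt_r (D : TwoDesign α) : D.lam < D.r := by
  have hlv := D.lam_v
  have hkv := D.k_lt_v
  have hlk := D.lam_lt_k
  have hl0 := D.lam_pos
  nlinarith [hlv, hkv, hlk, hl0]

set_option maxHeartbeats 1000000 in
theorem neighbourhood_lower_bound_blocks (D : TwoDesign α) :
    (D.r : ℝ) ^ 2 > (D.lam : ℝ) * (D.b : ℝ) ∧
    ∀ Y ⊆ D.blocks,
      (((D.pointNbhd Y).card : ℝ)) ≥
        (D.r : ℝ) * (D.k : ℝ) * (Y.card : ℝ) /
          ((D.r : ℝ) ^ 2 - (D.lam : ℝ) * ((D.b : ℝ) - (Y.card : ℝ))) := by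
  have hbkR : (D.b : ℝ) * D.k = (D.v : ℝ) * D.r := by exact_mod_cast D.bk_eq
  have hlvR : (D.lam : ℝ) * D.v + D.r = (D.r : ℝ) * D.k + D.lam := by
    exact_mod_cast D.lam_v
  have hkeyR : (D.k : ℝ) * ((D.r : ℝ) ^ 2 - (D.lam : ℝ) * D.b)
      = (D.r : ℝ) * ((D.r : ℝ) - D.lam) := by
    linear_combination (-(D.lam : ℝ)) * hbkR + (-(D.r : ℝ)) * hlvR
  have hlrR : (D.lam : ℝ) < D.r := by exact_mod_cast D.lam_lt_r
  have hr0 : (0 : ℝ) < D.r := lt_of_le_of_lt (Nat.cast_nonneg _) hlrR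
  have hk0 : (0 : ℝ) < D.k := by
    have h := D.lam_lt_k
    have h2 := D.lam_pos
    exact_mod_cast (by omega : 0 < D.k)
  have part1 : (D.r : ℝ) ^ 2 > (D.lam : ℝ) * D.b := by
    nlinarith [hkeyR, mul_pos hr0 (sub_pos.2 hlrR), hk0]
  refine ⟨part1, fun Y hY => ?_⟩
  have hmb : Y.card ≤ D.b := D.card_blocks ▸ Finset.card_le_card hY
  set N := D.pointNbhd Y with hNdef
  have hNP : N ⊆ D.points := Finset.filter_subset _ _
  have hsum1 := D.sum_inter_card N hNP
  have hsum2 := D.sum_inter_card_sq N hNP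
  have hYk : ∀ B ∈ Y, (N ∩ B).card = D.k := by
    intro B hB
    have hBN : B ⊆ N := by
      intro p hpB
      rw [hNdef]
      simp only [TwoDesign.pointNbhd, Finset.mem_filter]
      exact ⟨D.block_subset B (hY hB) hpB, B, hB, hpB⟩
    rw [Finset.inter_eq_right.2 hBN]
    exact D.card_block B (hY hB)
  have hsplit1 : ∑ B ∈ D.blocks \ Y, (N ∩ B).card + Y.card * D.k
      = N.card * D.r := by
    rw [← hsum1, ← Finset.sum_sdiff hY]
    congr 1
    rw [Finset.sum_congr rfl hYk, Finset.sum_const, smul_eq_mul]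
  have hsplit2 : ∑ B ∈ D.blocks \ Y, (N ∩ B).card ^ 2 + Y.card * D.k ^ 2
      + D.lam * N.card = N.card * D.r + D.lam * N.card ^ 2 := by
    rw [← hsum2, ← Finset.sum_sdiff hY]
    congr 2
    have h : ∀ B ∈ Y, (N ∩ B).card ^ 2 = D.k ^ 2 := fun B hB => by rw [hYk B hB]
    rw [Finset.sum_congr rfl h, Finset.sum_const, smul_eq_mul]
  have hcardsd : (D.blocks \ Y).card + Y.card = D.b := by
    rw [Finset.card_sdiff_of_subset hY, ← D.card_blocks]
    exact Nat.sub_add_cancel (Finset.card_le_card hY)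
  -- real versions
  have hS : ((∑ B ∈ D.blocks \ Y, (N ∩ B).card : ℕ) : ℝ)
      + (Y.card : ℝ) * (D.k : ℝ) = (N.card : ℝ) * (D.r : ℝ) := by
    exact_mod_cast hsplit1
  have hQ : ((∑ B ∈ D.blocks \ Y, (N ∩ B).card ^ 2 : ℕ) : ℝ)
      + (Y.card : ℝ) * (D.k : ℝ) ^ 2 + (D.lam : ℝ) * (N.card : ℝ)
      = (N.card : ℝ) * (D.r : ℝ) + (D.lam : ℝ) * (N.card : ℝ) ^ 2 := by
    exact_mod_cast hsplit2
  have hc : (((D.blocks \ Y).card : ℕ) : ℝ) + (Y.card : ℝ) = (D.b : ℝ) := by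
    exact_mod_cast hcardsd
  have hCS : ((∑ B ∈ D.blocks \ Y, (N ∩ B).card : ℕ) : ℝ) ^ 2
      ≤ (((D.blocks \ Y).card : ℕ) : ℝ)
        * ((∑ B ∈ D.blocks \ Y, (N ∩ B).card ^ 2 : ℕ) : ℝ) := by
    push_cast
    exact sq_sum_le_card_mul_sum_sq
  set R : ℝ := (D.r : ℝ) with hRdef
  set K : ℝ := (D.k : ℝ) with hKdef
  set L : ℝ := (D.lam : ℝ) with hLdef
  set Bb : ℝ := (D.b : ℝ) with hBbdef
  set n : ℝ := (N.card : ℝ) with hndef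
  set m : ℝ := (Y.card : ℝ) with hmdef
  set S : ℝ := ((∑ B ∈ D.blocks \ Y, (N ∩ B).card : ℕ) : ℝ) with hSdef
  set Q : ℝ := ((∑ B ∈ D.blocks \ Y, (N ∩ B).card ^ 2 : ℕ) : ℝ) with hQdef
  set c : ℝ := (((D.blocks \ Y).card : ℕ) : ℝ) with hcdef
  have hm0 : (0 : ℝ) ≤ m := Nat.cast_nonneg _
  have hn0 : (0 : ℝ) ≤ n := Nat.cast_nonneg _
  have hmbR : m ≤ Bb := by rw [hmdef, hBbdef]; exact_mod_cast hmb
  have hL0 : (0 : ℝ) ≤ L := Nat.cast_nonneg _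
  have hApos : (0 : ℝ) < R ^ 2 - L * (Bb - m) := by
    nlinarith [part1, mul_nonneg hL0 hm0]
  rw [ge_iff_le, div_le_iff₀ hApos]
  by_contra hcon
  push_neg at hcon
  have hS' : S = n * R - m * K := by linarith
  have hc' : c = Bb - m := by linarith
  have hQ' : Q = n * R + L * n ^ 2 - L * n - m * K ^ 2 := by linarith
  rw [hS', hc', hQ'] at hCS
  have hf : (0 : ℝ) ≤ (Bb - m) * (n * R + L * n ^ 2 - L * n - K ^ 2 * m)
      - (n * R - K * m) ^ 2 := by linarith [hCS]
  have hF1 : (0 : ℝ) < R * K * m - (R ^ 2 - L * (Bb - m)) * n := by linarith [hcon]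
  have hF2 : (R ^ 2 - L * (Bb - m)) * n - ((R - L) * (Bb - m) + 2 * (R * K * m))
      + R * K * m < 0 := by
    have h1 : (0 : ℝ) ≤ (R - L) * (Bb - m) :=
      mul_nonneg (by linarith) (by linarith)
    linarith [hcon, h1]
  have hid : (R ^ 2 - L * (Bb - m)) * ((Bb - m) * (n * R + L * n ^ 2 - L * n - K ^ 2 * m)
        - (n * R - K * m) ^ 2)
      = (R * K * m - (R ^ 2 - L * (Bb - m)) * n)
        * ((R ^ 2 - L * (Bb - m)) * n - ((R - L) * (Bb - m) + 2 * (R * K * m))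
          + R * K * m) := by
    linear_combination (-(K * m * (Bb - m))) * hkeyR
  have e1 : (0 : ℝ) ≤ (R ^ 2 - L * (Bb - m)) * ((Bb - m) * (n * R + L * n ^ 2 - L * n
      - K ^ 2 * m) - (n * R - K * m) ^ 2) := mul_nonneg hApos.le hf
  have e2 := mul_neg_of_pos_of_neg hF1 hF2
  linarith [hid, e1, e2]
end

section
/- Let D = (P, 𝓑) be a 2-(v,k,λ) design with b blocks and with r blocks through each point, and let G be the incidence graph of D. Then for every X ⊆ P and every Y ⊆ 𝓑, |N(X) \ Y| ≥ (4λ/k²)·|X|·|P \ (X ∪ N(Y))|. -/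
open Finset

variable {α : Type*} [DecidableEq α]

theorem neighbourhood_lower_bound_mixed (D : TwoDesign α)
    (X : Finset α) (hX : X ⊆ D.points)
    (Y : Finset (Finset α)) (hY : Y ⊆ D.blocks) :
    (((D.blockNbhd X \ Y).card : ℝ)) ≥
      4 * (D.lam : ℝ) / (D.k : ℝ) ^ 2 * (X.card : ℝ) *
        (((D.points \ (X ∪ D.pointNbhd Y)).card : ℝ)) := by
  classical
  set Z := D.points \ (X ∪ D.pointNbhd Y) with hZdef
  set T := D.blockNbhd X \ Y with hTdef
  have hk : 0 < D.k := lt_trans D.lam_pos D.lam_lt_k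
  have hTsub : T ⊆ D.blocks := fun B hB => by
    have := (Finset.mem_sdiff.mp hB).1
    exact Finset.mem_filter.mp this |>.1
  have key : 4 * (D.lam * X.card * Z.card) ≤ D.k ^ 2 * T.card := by
    have step1 : ∀ p ∈ X ×ˢ Z,
        (T.filter fun B => p.1 ∈ B ∧ p.2 ∈ B).card = D.lam := by
      rintro ⟨x, z⟩ hp
      rw [Finset.mem_product] at hp
      obtain ⟨hx, hz⟩ := hp
      have hzP : z ∈ D.points := (Finset.mem_sdiff.mp hz).1
      have hznotin : z ∉ X ∪ D.pointNbhd Y := (Finset.mem_sdiff.mp hz).2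
      have hxz : x ≠ z := by
        rintro rfl
        exact hznotin (Finset.mem_union_left _ hx)
      have heq : (T.filter fun B => x ∈ B ∧ z ∈ B)
          = (D.blocks.filter fun B => x ∈ B ∧ z ∈ B) := by
        ext B
        simp only [Finset.mem_filter, hTdef, Finset.mem_sdiff,
          TwoDesign.blockNbhd]
        constructor
        · rintro ⟨⟨⟨hBb, -⟩, -⟩, hxB, hzB⟩
          exact ⟨hBb, hxB, hzB⟩
        · rintro ⟨hBb, hxB, hzB⟩
          refine ⟨⟨⟨hBb, ⟨x, hx, hxB⟩⟩, ?_⟩, hxB, hzB⟩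
          intro hBY
          exact hznotin (Finset.mem_union_right _
            (Finset.mem_filter.mpr ⟨hzP, ⟨B, hBY, hzB⟩⟩))
      rw [heq, D.pair_count x (hX hx) z hzP hxz]
    have swap : ∑ p ∈ X ×ˢ Z, (T.filter fun B => p.1 ∈ B ∧ p.2 ∈ B).card
        = ∑ B ∈ T, ((X ×ˢ Z).filter fun p => p.1 ∈ B ∧ p.2 ∈ B).card := by
      simp only [Finset.card_filter]
      exact Finset.sum_comm
    have perblock : ∀ B ∈ T,
        4 * ((X ×ˢ Z).filter fun p => p.1 ∈ B ∧ p.2 ∈ B).card ≤ D.k ^ 2 := by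
      intro B hB
      have hBb : B ∈ D.blocks := hTsub hB
      have hfp : ((X ×ˢ Z).filter fun p => p.1 ∈ B ∧ p.2 ∈ B)
          = (X.filter (· ∈ B)) ×ˢ (Z.filter (· ∈ B)) := by
        ext ⟨x, z⟩
        simp only [Finset.mem_filter, Finset.mem_product]
        tauto
      rw [hfp, Finset.card_product]
      set a := (X.filter (· ∈ B)).card
      set c := (Z.filter (· ∈ B)).card
      have hdisj : Disjoint (X.filter (· ∈ B)) (Z.filter (· ∈ B)) := by
        apply Finset.disjoint_filter_filter
        exact Finset.disjoint_left.mpr fun p hp hpZ =>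
          (Finset.mem_sdiff.mp hpZ).2 (Finset.mem_union_left _ hp)
      have hsum : a + c ≤ D.k := by
        have : (X.filter (· ∈ B)) ∪ (Z.filter (· ∈ B)) ⊆ B := by
          intro p hp
          rcases Finset.mem_union.mp hp with h | h
          · exact (Finset.mem_filter.mp h).2
          · exact (Finset.mem_filter.mp h).2
        calc a + c = ((X.filter (· ∈ B)) ∪ (Z.filter (· ∈ B))).card :=
              (Finset.card_union_of_disjoint hdisj).symm
          _ ≤ B.card := Finset.card_le_card this
          _ = D.k := D.card_block B hBb
      nlinarith [sq_nonneg (a - c : ℤ), hsum]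
    calc 4 * (D.lam * X.card * Z.card)
        = 4 * ∑ p ∈ X ×ˢ Z, (T.filter fun B => p.1 ∈ B ∧ p.2 ∈ B).card := by
          rw [Finset.sum_congr rfl step1, Finset.sum_const, Finset.card_product]
          ring
      _ = ∑ B ∈ T, 4 * ((X ×ˢ Z).filter fun p => p.1 ∈ B ∧ p.2 ∈ B).card := by
          rw [swap, Finset.mul_sum]
      _ ≤ ∑ B ∈ T, D.k ^ 2 := Finset.sum_le_sum perblock
      _ = D.k ^ 2 * T.card := by rw [Finset.sum_const, smul_eq_mul, mul_comm]
  have hkR : (0 : ℝ) < (D.k : ℝ) ^ 2 := by positivity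
  rw [ge_iff_le, div_mul_eq_mul_div, div_mul_eq_mul_div, div_le_iff₀ hkR]
  have hcast : ((4 * (D.lam * X.card * Z.card) : ℕ) : ℝ)
      ≤ ((D.k ^ 2 * T.card : ℕ) : ℝ) := Nat.cast_le.mpr key
  push_cast at hcast
  nlinarith [hcast]
end

section
/- Let U be a unital of order n ≥ 2 and let G_U be its incidence graph. Then i(G_U) ≤ 2(n³ + 1 − min{m(U), ⌊c(n)⌋}) / (n²(n² + 1)). -/
open Finset

variable {α : Type*} [DecidableEq α]

/-- A unital of order `n`: a 2-(n³+1, n+1, 1) design; it has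
`n⁴ - n³ + n²` blocks and `n²` blocks through each point. -/
def TwoDesign.IsUnital (D : TwoDesign α) (n : ℕ) : Prop :=
  D.v = n ^ 3 + 1 ∧ D.b = n ^ 4 - n ^ 3 + n ^ 2 ∧ D.r = n ^ 2 ∧
    D.k = n + 1 ∧ D.lam = 1

/-- `c(n) = n² - (√(8n²+9) - 3)/2`. -/
noncomputable def cFun (n : ℕ) : ℝ :=
  (n : ℝ) ^ 2 - (Real.sqrt (8 * (n : ℝ) ^ 2 + 9) - 3) / 2

/-- The vertex-isoperimetric number of the incidence graph of `D`:
a subset `S` of the vertex set `P ∪ 𝓑` is encoded as the pair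
`(X, Y) = (S ∩ P, S ∩ 𝓑)`; then `|S| = |X| + |Y|` and
`|N(S)| = |N(Y) \ X| + |N(X) \ Y|`. -/
noncomputable def isoInc (D : TwoDesign α) : ℝ :=
  sInf { t : ℝ | ∃ X ⊆ D.points, ∃ Y ⊆ D.blocks,
    0 < X.card + Y.card ∧ 2 * (X.card + Y.card) ≤ D.v + D.b ∧
    t = (((D.pointNbhd Y \ X).card + (D.blockNbhd X \ Y).card : ℕ) : ℝ) /
        ((X.card + Y.card : ℕ) : ℝ) }

/-- In the non-incidence graph, the neighbourhood of a set `X` of points: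
the blocks missing at least one point of `X`. -/
def TwoDesign.blockNbhdC (D : TwoDesign α) (X : Finset α) : Finset (Finset α) :=
  D.blocks.filter fun B => ∃ p ∈ X, p ∉ B

/-- In the non-incidence graph, the neighbourhood of a set `Y` of blocks:
the points missed by at least one block of `Y`. -/
def TwoDesign.pointNbhdC (D : TwoDesign α) (Y : Finset (Finset α)) : Finset α :=
  D.points.filter fun p => ∃ B ∈ Y, p ∉ B

/-- The vertex-isoperimetric number of the non-incidence graph of `D`. -/
noncomputable def isoNonInc (D : TwoDesign α) : ℝ :=
  sInf { t : ℝ | ∃ X ⊆ D.points, ∃ Y ⊆ D.blocks,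
    0 < X.card + Y.card ∧ 2 * (X.card + Y.card) ≤ D.v + D.b ∧
    t = (((D.pointNbhdC Y \ X).card + (D.blockNbhdC X \ Y).card : ℕ) : ℝ) /
        ((X.card + Y.card : ℕ) : ℝ) }

/-- An arc of a design: a set of at least 3 points, no three collinear. -/
def TwoDesign.IsArc (D : TwoDesign α) (X : Finset α) : Prop :=
  X ⊆ D.points ∧ 3 ≤ X.card ∧ ∀ B ∈ D.blocks, (B ∩ X).card ≤ 2

/-- `m(U)`: the maximum size of an arc in the design. -/
noncomputable def maxArc (D : TwoDesign α) : ℕ :=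
  sSup { k : ℕ | ∃ X : Finset α, D.IsArc X ∧ X.card = k }

/-
Take a set `A` of `m = min(m(U), ⌊c(n)⌋)` points no three on a line. Double counting incidences and
pairs shows that exactly `m n² - m(m - 1)/2` lines meet `A`, and since `c(n)` is the smaller root of
`x² - (2n² + 3)x + n²(n² + 1)`, the bound `m ≤ c(n)` says that `A` together with these lines has at
most `n²(n² + 1)/2` elements. Padding with further lines to exactly `n²(n² + 1)/2` vertices gives a
set, at most half the incidence graph, whose neighbourhood lies among the `n³ + 1 - m` points
outside `A`.
-/

namespace TwoDesign

variable (D : TwoDesign α) {A : Finset α}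

theorem three_le_v : 3 ≤ D.v := by
  have := D.lam_pos
  have := D.lam_lt_k
  have := D.k_lt_v
  omega

theorem sum_card_inter_blocks (hA : A ⊆ D.points) :
    ∑ B ∈ D.blocks, #(A ∩ B) = #A * D.r :=
  sum_card_inter fun p hp ↦ D.point_count p (hA hp)

theorem sum_card_offDiag_inter_blocks (hA : A ⊆ D.points) :
    ∑ B ∈ D.blocks, #(A ∩ B).offDiag = #A.offDiag * D.lam := by
  have hoffDiag : ∀ B : Finset α,
      (A ∩ B).offDiag = {z ∈ A.offDiag | z.1 ∈ B ∧ z.2 ∈ B} := by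
    intro B
    ext ⟨p, q⟩
    simp only [mem_offDiag, mem_filter, mem_inter]
    tauto
  simp_rw [hoffDiag, card_filter]
  rw [sum_comm, ← smul_eq_mul, ← sum_const]
  refine sum_congr rfl fun z hz ↦ ?_
  obtain ⟨hp, hq, hpq⟩ := mem_offDiag.1 hz
  rw [← card_filter, D.pair_count _ (hA hp) _ (hA hq) hpq]

/-- Line by line: a line meeting `A` in `k ≤ 2` points satisfies `2 [k ≠ 0] + k (k - 1) = 2k`. -/
theorem two_mul_card_blockNbhd_add (hAP : A ⊆ D.points)
    (hA : ∀ B ∈ D.blocks, #(A ∩ B) ≤ 2) :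
    2 * #(D.blockNbhd A) + #A.offDiag * D.lam = 2 * (#A * D.r) := by
  rw [← D.sum_card_offDiag_inter_blocks hAP, ← D.sum_card_inter_blocks hAP, blockNbhd,
    card_filter, mul_sum, mul_sum, ← sum_add_distrib]
  refine sum_congr rfl fun B hB ↦ ?_
  have hmeet : (∃ p ∈ A, p ∈ B) ↔ 0 < #(A ∩ B) := by
    simp only [card_pos, Finset.Nonempty, mem_inter]
  have h2 := hA B hB
  rw [offDiag_card]
  split_ifs with h <;> rw [hmeet] at h <;> interval_cases #(A ∩ B) <;> omega

theorem exists_subset_card_eq_of_le_maxArc {m : ℕ} (hm : m ≤ maxArc D) :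
    ∃ A ⊆ D.points, #A = m ∧ ∀ B ∈ D.blocks, #(A ∩ B) ≤ 2 := by
  by_cases hm2 : m ≤ 2
  · have hmv : m ≤ #D.points := by
      have := D.three_le_v
      rw [D.card_points]
      omega
    obtain ⟨A, hAP, hA⟩ := exists_subset_card_eq hmv
    exact ⟨A, hAP, hA, fun B _ ↦ (card_le_card inter_subset_left).trans (hA ▸ hm2)⟩
  have hne : {k | ∃ X, D.IsArc X ∧ #X = k}.Nonempty := by
    by_contra h
    rw [Set.not_nonempty_iff_eq_empty] at h
    rw [maxArc, h, csSup_empty] at hm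
    exact hm2 (hm.trans bot_le)
  have hbdd : BddAbove {k | ∃ X, D.IsArc X ∧ #X = k} :=
    ⟨#D.points, fun k ⟨X, hX, hk⟩ ↦ hk ▸ card_le_card hX.1⟩
  obtain ⟨X, ⟨hXP, -, hX⟩, hXcard⟩ := Nat.sSup_mem hne hbdd
  obtain ⟨A, hAX, hA⟩ := exists_subset_card_eq (hm.trans_eq hXcard.symm)
  refine ⟨A, hAX.trans hXP, hA, fun B hB ↦ ?_⟩
  rw [inter_comm]
  exact (card_le_card (inter_subset_inter_left hAX)).trans (hX B hB)

theorem isoInc_le {X : Finset α} {Y : Finset (Finset α)} (hX : X ⊆ D.points)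
    (hY : Y ⊆ D.blocks) (hpos : 0 < #X + #Y) (hhalf : 2 * (#X + #Y) ≤ D.v + D.b) :
    isoInc D ≤ ((#(D.pointNbhd Y \ X) + #(D.blockNbhd X \ Y) : ℕ) : ℝ) / ((#X + #Y : ℕ) : ℝ) :=
  csInf_le ⟨0, fun _ ⟨_, _, _, _, _, _, ht⟩ ↦ ht ▸ by positivity⟩
    ⟨X, hX, Y, hY, hpos, hhalf, rfl⟩

theorem isoInc_le_of_blockNbhd_subset {X : Finset α} {Y : Finset (Finset α)}
    (hX : X ⊆ D.points) (hXY : D.blockNbhd X ⊆ Y) (hY : Y ⊆ D.blocks) (hpos : 0 < #X + #Y)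
    (hhalf : 2 * (#X + #Y) ≤ D.v + D.b) :
    isoInc D ≤ ((D.v - #X : ℕ) : ℝ) / ((#X + #Y : ℕ) : ℝ) := by
  refine (D.isoInc_le hX hY hpos hhalf).trans (div_le_div_of_nonneg_right ?_ (by positivity))
  have hnum : #(D.pointNbhd Y \ X) ≤ D.v - #X := by
    rw [← D.card_points, ← card_sdiff_of_subset hX]
    exact card_le_card (sdiff_subset_sdiff (filter_subset _ _) le_rfl)
  rw [sdiff_eq_empty_iff_subset.2 hXY, card_empty, add_zero]
  exact_mod_cast hnum

theorem isoInc_le_of_card_add_card_blockNbhd_le {X : Finset α} {K : ℕ} (hX : X ⊆ D.points)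
    (hK : #X + #(D.blockNbhd X) ≤ K) (hKb : K ≤ D.b) (hKpos : 0 < K)
    (hKhalf : 2 * K ≤ D.v + D.b) :
    isoInc D ≤ ((D.v - #X : ℕ) : ℝ) / K := by
  obtain ⟨Y, hXY, hY, hYcard⟩ := exists_subsuperset_card_eq (filter_subset _ D.blocks)
    (show #(D.blockNbhd X) ≤ K - #X by omega)
    (show K - #X ≤ #D.blocks by rw [D.card_blocks]; omega)
  have hcard : #X + #Y = K := by omega
  have := D.isoInc_le_of_blockNbhd_subset hX hXY hY (by omega) (by omega)
  rwa [hcard] at this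

end TwoDesign

theorem cFun_nonneg (n : ℕ) : 0 ≤ cFun n := by
  have hs := Real.sq_sqrt (show (0 : ℝ) ≤ 8 * n ^ 2 + 9 by positivity)
  have := Real.sqrt_nonneg (8 * (n : ℝ) ^ 2 + 9)
  unfold cFun
  nlinarith

/-- `c(n)` is the smaller root of `x² - (2n² + 3)x + n²(n² + 1)`. -/
theorem mul_le_of_le_cFun {n m : ℕ} (h : (m : ℝ) ≤ cFun n) :
    m * (2 * n ^ 2 + 3) ≤ n ^ 2 * (n ^ 2 + 1) + m ^ 2 := by
  have hs := Real.sq_sqrt (show (0 : ℝ) ≤ 8 * n ^ 2 + 9 by positivity)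
  have hs0 := Real.sqrt_nonneg (8 * (n : ℝ) ^ 2 + 9)
  have hle : Real.sqrt (8 * n ^ 2 + 9) ≤ 2 * n ^ 2 + 3 - 2 * m := by unfold cFun at h; linarith
  have := mul_self_le_mul_self hs0 hle
  exact_mod_cast (by nlinarith : (m : ℝ) * (2 * n ^ 2 + 3) ≤ n ^ 2 * (n ^ 2 + 1) + m ^ 2)

theorem TwoDesign.IsUnital.two_mul_card_add_card_blockNbhd_le {D : TwoDesign α} {n : ℕ}
    (hU : D.IsUnital n) {A : Finset α} (hAP : A ⊆ D.points)
    (hA : ∀ B ∈ D.blocks, #(A ∩ B) ≤ 2) (hAc : (#A : ℝ) ≤ cFun n) :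
    2 * (#A + #(D.blockNbhd A)) ≤ n ^ 2 * (n ^ 2 + 1) := by
  have hcount := D.two_mul_card_blockNbhd_add hAP hA
  rw [hU.2.2.1, hU.2.2.2.2, offDiag_card] at hcount
  have hquad := mul_le_of_le_cFun hAc
  have hsq : #A ≤ #A * #A := Nat.le_mul_self _
  zify [hsq] at hcount hquad ⊢
  linarith

theorem TwoDesign.IsUnital.isoInc_le {D : TwoDesign α} {n : ℕ} (hU : D.IsUnital n)
    {X : Finset α} (hX : X ⊆ D.points)
    (hXsmall : 2 * (#X + #(D.blockNbhd X)) ≤ n ^ 2 * (n ^ 2 + 1)) :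
    isoInc D ≤ 2 * ((n : ℝ) ^ 3 + 1 - #X) / ((n : ℝ) ^ 2 * ((n : ℝ) ^ 2 + 1)) := by
  obtain ⟨K, hK⟩ := (Nat.even_mul_succ_self (n ^ 2)).two_dvd
  have hn : n ≠ 0 := by
    rintro rfl
    have := D.three_le_v
    simp [hU.1] at this
  have hKpos : 0 < K := by
    have : 0 < n ^ 2 * (n ^ 2 + 1) := by positivity
    omega
  have hn43 : n ^ 3 ≤ n ^ 4 := Nat.pow_le_pow_right (by omega) (by omega)
  have hn32 : 2 * n ^ 3 ≤ n ^ 4 + n ^ 2 := by nlinarith [sq_nonneg ((n : ℤ) ^ 2 - n)]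
  have hXv : #X ≤ n ^ 3 + 1 := by
    rw [← hU.1, ← D.card_points]
    exact card_le_card hX
  have hKR : (n : ℝ) ^ 2 * ((n : ℝ) ^ 2 + 1) = 2 * K := by exact_mod_cast hK
  rw [hKR]
  refine (D.isoInc_le_of_card_add_card_blockNbhd_le hX (by omega) ?_ hKpos ?_).trans_eq ?_
  · rw [hU.2.1]
    zify [hn43] at hK hn32 ⊢
    linarith
  · rw [hU.1, hU.2.1]
    zify [hn43] at hK ⊢
    linarith
  · rw [hU.1, Nat.cast_sub hXv]
    field_simp
    push_cast
    ring

theorem iso_inc_upper_bound_general (n : ℕ) (D : TwoDesign α) (hU : D.IsUnital n) :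
    isoInc D ≤ 2 * ((n : ℝ) ^ 3 + 1 - min ((maxArc D : ℝ)) ((⌊cFun n⌋ : ℝ))) /
      ((n : ℝ) ^ 2 * ((n : ℝ) ^ 2 + 1)) := by
  set m := min (maxArc D) ⌊cFun n⌋₊
  have hmin : min (maxArc D : ℝ) (⌊cFun n⌋ : ℝ) = m := by
    rw [← natCast_floor_eq_intCast_floor (cFun_nonneg n), ← Nat.cast_min]
  obtain ⟨A, hAP, hAm, hA⟩ := D.exists_subset_card_eq_of_le_maxArc (m := m) (min_le_left _ _)
  have hAc : (#A : ℝ) ≤ cFun n :=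
    hAm ▸ (Nat.cast_le.2 (min_le_right _ _)).trans (Nat.floor_le (cFun_nonneg n))
  rw [hmin, ← hAm]
  exact hU.isoInc_le hAP (hU.two_mul_card_add_card_blockNbhd_le hAP hA hAc)

theorem iso_inc_upper_bound (n : ℕ) (hn : 2 ≤ n) (D : TwoDesign α) (hU : D.IsUnital n) :
    isoInc D ≤ 2 * ((n : ℝ) ^ 3 + 1 - min ((maxArc D : ℝ)) ((⌊cFun n⌋ : ℝ))) /
      ((n : ℝ) ^ 2 * ((n : ℝ) ^ 2 + 1)) :=
  iso_inc_upper_bound_general n D hU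
end

section
/- Let U be a unital of order 2 and let G_Ū be its non-incidence graph. Then i(G_Ū) = 4/5. -/
open Finset

variable {α : Type*} [DecidableEq α]

lemma TwoDesign.two_blocks_aux (D : TwoDesign α) (hlam : D.lam = 1) {B₁ B₂ : Finset α}
    (h1 : B₁ ∈ D.blocks) (h2 : B₂ ∈ D.blocks) (hne : B₁ ≠ B₂) :
    (B₁ ∩ B₂).card ≤ 1 := by
  by_contra hcon
  push_neg at hcon
  obtain ⟨p, hp, q, hq, hpq⟩ := Finset.one_lt_card.mp hcon
  simp only [mem_inter] at hp hq
  have hpP : p ∈ D.points := D.block_subset B₁ h1 hp.1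
  have hqP : q ∈ D.points := D.block_subset B₁ h1 hq.1
  have hcount := D.pair_count p hpP q hqP hpq
  rw [hlam] at hcount
  have hsub : {B₁, B₂} ⊆ D.blocks.filter fun B => p ∈ B ∧ q ∈ B := by
    intro B hB
    simp only [mem_insert, mem_singleton] at hB
    rcases hB with rfl | rfl
    · exact mem_filter.mpr ⟨h1, hp.1, hq.1⟩
    · exact mem_filter.mpr ⟨h2, hp.2, hq.2⟩
  have hle := Finset.card_le_card hsub
  rw [hcount, Finset.card_insert_of_notMem (by simpa using hne),
    Finset.card_singleton] at hle
  omega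

theorem iso_noninc_order_two (D : TwoDesign α) (hU : D.IsUnital 2) :
    isoNonInc D = 4 / 5 := by
  obtain ⟨hv, hb, hr, hk, hlam⟩ := hU
  norm_num at hv hb hr hk
  have hPcard : D.points.card = 9 := by rw [D.card_points, hv]
  have hBcard : D.blocks.card = 12 := by rw [D.card_blocks, hb]
  apply IsLeast.csInf_eq
  constructor
  · -- 4/5 is attained
    obtain ⟨p, hp⟩ := Finset.card_pos.mp (by rw [hPcard]; norm_num)
    have hthru : (D.blocks.filter fun B => p ∈ B).card = 4 := by
      rw [D.point_count p hp, hr]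
    have hsplit := Finset.card_filter_add_card_filter_not
      (s := D.blocks) (p := fun B => p ∈ B)
    have hmiss : (D.blocks.filter fun B => p ∉ B).card = 8 := by omega
    obtain ⟨B₀, hB₀⟩ := Finset.card_pos.mp (show 0 < (D.blocks.filter fun B => p ∈ B).card by omega)
    have hB₀b : B₀ ∈ D.blocks := (mem_filter.mp hB₀).1
    have hpB₀ : p ∈ B₀ := (mem_filter.mp hB₀).2
    set Y : Finset (Finset α) := insert B₀ (D.blocks.filter fun B => p ∉ B) with hYdef
    have hB₀nm : B₀ ∉ D.blocks.filter fun B => p ∉ B := by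
      simp [hpB₀]
    have hYcard : Y.card = 9 := by
      rw [hYdef, Finset.card_insert_of_notMem hB₀nm, hmiss]
    have hYsub : Y ⊆ D.blocks := by
      intro B hB
      rcases Finset.mem_insert.mp hB with rfl | hB
      · exact hB₀b
      · exact (mem_filter.mp hB).1
    refine ⟨{p}, by simpa using hp, Y, hYsub, ?_, ?_, ?_⟩
    · simp
    · rw [hv, hb]; simp [hYcard]
    · have hPN : D.pointNbhdC Y = D.points := by
        rw [TwoDesign.pointNbhdC, Finset.filter_true_of_mem]
        intro q hq
        by_contra hcon
        push_neg at hcon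
        have hsubq : Y ⊆ D.blocks.filter fun B => q ∈ B :=
          fun B hB => mem_filter.mpr ⟨hYsub hB, hcon B hB⟩
        have hle := Finset.card_le_card hsubq
        rw [hYcard, D.point_count q hq, hr] at hle
        omega
      have h1 : (D.pointNbhdC Y \ {p}).card = 8 := by
        rw [hPN, Finset.card_sdiff_of_subset (by simpa using hp), hPcard, Finset.card_singleton]
      have h2 : D.blockNbhdC {p} \ Y = ∅ := by
        rw [Finset.sdiff_eq_empty_iff_subset]
        intro B hB
        obtain ⟨hBb, q, hq, hqB⟩ := mem_filter.mp hB
        rw [Finset.mem_singleton] at hq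
        subst hq
        exact Finset.mem_insert_of_mem (mem_filter.mpr ⟨hBb, hqB⟩)
      rw [h1, h2, hYcard]
      norm_num
  · -- lower bound
    rintro t ⟨X, hX, Y, hY, hpos, hle, rfl⟩
    have hx9 : X.card ≤ 9 := by rw [← hPcard]; exact Finset.card_le_card hX
    have hy12 : Y.card ≤ 12 := by rw [← hBcard]; exact Finset.card_le_card hY
    have hs10 : X.card + Y.card ≤ 10 := by rw [hv, hb] at hle; omega
    set A : Finset α := (D.points \ X).filter (fun q => ∀ B ∈ Y, q ∈ B) with hAdef
    set C : Finset (Finset α) := (D.blocks \ Y).filter (fun B => ∀ q ∈ X, q ∈ B) with hCdef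
    -- partition of points \ X
    have hP1 : D.pointNbhdC Y \ X = (D.points \ X).filter (fun q => ∃ B ∈ Y, q ∉ B) := by
      ext q
      simp only [TwoDesign.pointNbhdC, mem_filter, mem_sdiff]
      tauto
    have hAeq : (D.points \ X).filter (fun q => ¬ ∃ B ∈ Y, q ∉ B) = A := by
      apply Finset.filter_congr
      intro q _
      simp
    have hApart : (D.pointNbhdC Y \ X).card + A.card = (D.points \ X).card := by
      rw [hP1, ← hAeq]
      exact Finset.card_filter_add_card_filter_not _
    have hPXcard : (D.points \ X).card + X.card = 9 := by
      rw [Finset.card_sdiff_add_card_eq_card hX, hPcard]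
    -- partition of blocks \ Y
    have hB1 : D.blockNbhdC X \ Y = (D.blocks \ Y).filter (fun B => ∃ q ∈ X, q ∉ B) := by
      ext B
      simp only [TwoDesign.blockNbhdC, mem_filter, mem_sdiff]
      tauto
    have hCeq : (D.blocks \ Y).filter (fun B => ¬ ∃ q ∈ X, q ∉ B) = C := by
      apply Finset.filter_congr
      intro B _
      simp
    have hCpart : (D.blockNbhdC X \ Y).card + C.card = (D.blocks \ Y).card := by
      rw [hB1, ← hCeq]
      exact Finset.card_filter_add_card_filter_not _
    have hBYcard : (D.blocks \ Y).card + Y.card = 12 := by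
      rw [Finset.card_sdiff_add_card_eq_card hY, hBcard]
    -- bounds on A
    have ha3 : 1 ≤ Y.card → A.card ≤ 3 := by
      intro h
      obtain ⟨B₀, hB₀⟩ := Finset.card_pos.mp h
      have hsub : A ⊆ B₀ := by
        intro q hq
        exact (mem_filter.mp hq).2 B₀ hB₀
      calc A.card ≤ B₀.card := Finset.card_le_card hsub
        _ = 3 := by rw [D.card_block B₀ (hY hB₀), hk]
    have ha1 : 2 ≤ Y.card → A.card ≤ 1 := by
      intro h
      obtain ⟨B₁, hB₁, B₂, hB₂, hne⟩ := Finset.one_lt_card.mp h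
      have hsub : A ⊆ B₁ ∩ B₂ := by
        intro q hq
        exact Finset.mem_inter.mpr ⟨(mem_filter.mp hq).2 B₁ hB₁, (mem_filter.mp hq).2 B₂ hB₂⟩
      exact le_trans (Finset.card_le_card hsub)
        (D.two_blocks_aux hlam (hY hB₁) (hY hB₂) hne)
    have ha0 : A.card = 0 ∨ Y.card ≤ 4 := by
      rcases Finset.eq_empty_or_nonempty A with hA | ⟨q, hq⟩
      · left; rw [hA]; simp
      · right
        obtain ⟨hqP, hqall⟩ := mem_filter.mp hq
        have hqP' : q ∈ D.points := (Finset.mem_sdiff.mp hqP).1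
        have hsub : Y ⊆ D.blocks.filter fun B => q ∈ B :=
          fun B hB => mem_filter.mpr ⟨hY hB, hqall B hB⟩
        have hle := Finset.card_le_card hsub
        rw [D.point_count q hqP', hr] at hle
        exact hle
    -- bounds on C
    have hc4 : 1 ≤ X.card → C.card ≤ 4 := by
      intro h
      obtain ⟨p, hp⟩ := Finset.card_pos.mp h
      have hsub : C ⊆ D.blocks.filter fun B => p ∈ B := by
        intro B hB
        obtain ⟨hBb, hall⟩ := mem_filter.mp hB
        exact mem_filter.mpr ⟨(Finset.mem_sdiff.mp hBb).1, hall p hp⟩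
      have hle := Finset.card_le_card hsub
      rwa [D.point_count p (hX hp), hr] at hle
    have hc1 : 2 ≤ X.card → C.card ≤ 1 := by
      intro h
      obtain ⟨p, hp, q, hq, hne⟩ := Finset.one_lt_card.mp h
      have hsub : C ⊆ D.blocks.filter fun B => p ∈ B ∧ q ∈ B := by
        intro B hB
        obtain ⟨hBb, hall⟩ := mem_filter.mp hB
        exact mem_filter.mpr ⟨(Finset.mem_sdiff.mp hBb).1, hall p hp, hall q hq⟩
      have hle := Finset.card_le_card hsub
      rwa [D.pair_count p (hX hp) q (hX hq) hne, hlam] at hle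
    have hc0 : C.card = 0 ∨ X.card ≤ 3 := by
      rcases Finset.eq_empty_or_nonempty C with hC | ⟨B, hB⟩
      · left; rw [hC]; simp
      · right
        obtain ⟨hBb, hall⟩ := mem_filter.mp hB
        have hXB : X ⊆ B := fun q hq => hall q hq
        calc X.card ≤ B.card := Finset.card_le_card hXB
          _ = 3 := by rw [D.card_block B (Finset.mem_sdiff.mp hBb).1, hk]
    have key : 4 * (X.card + Y.card) ≤
        5 * ((D.pointNbhdC Y \ X).card + (D.blockNbhdC X \ Y).card) := by
      omega
    have hspos : (0 : ℝ) < ((X.card + Y.card : ℕ) : ℝ) := by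
      exact_mod_cast hpos
    rw [div_le_div_iff₀ (by norm_num) hspos]
    calc (4 : ℝ) * ((X.card + Y.card : ℕ) : ℝ)
        = ((4 * (X.card + Y.card) : ℕ) : ℝ) := by push_cast; ring
      _ ≤ ((5 * ((D.pointNbhdC Y \ X).card + (D.blockNbhdC X \ Y).card) : ℕ) : ℝ) := by
          exact_mod_cast key
      _ = (((D.pointNbhdC Y \ X).card + (D.blockNbhdC X \ Y).card : ℕ) : ℝ) * 5 := by
          push_cast; ring
end

section
/- Let U be a unital of order n ≥ 3 and let G_Ū be its non-incidence graph. Then i(G_Ū) = 2(n³ + 1) / (n²(n² + 1)). -/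
open Finset

variable {α : Type*} [DecidableEq α]

section AuxLemmas

/-- If `X` is a nonempty set of points, all blocks but at most `r` of them
miss some point of `X`. -/
lemma aux_blockNbhdC_large (D : TwoDesign α) {X : Finset α}
    (hX : X ⊆ D.points) (hne : X.Nonempty) :
    D.b ≤ (D.blockNbhdC X).card + D.r := by
  obtain ⟨p, hp⟩ := hne
  have hpP : p ∈ D.points := hX hp
  have h1 : (D.blocks.filter fun B => ¬ ∃ q ∈ X, q ∉ B) ⊆
      D.blocks.filter fun B => p ∈ B := by
    intro B hB
    simp only [Finset.mem_filter] at hB ⊢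
    push_neg at hB
    exact ⟨hB.1, hB.2 p hp⟩
  have h2 : (D.blocks.filter fun B => ¬ ∃ q ∈ X, q ∉ B).card ≤ D.r := by
    calc (D.blocks.filter fun B => ¬ ∃ q ∈ X, q ∉ B).card
        ≤ (D.blocks.filter fun B => p ∈ B).card := Finset.card_le_card h1
      _ = D.r := D.point_count p hpP
  have h3 : (D.blockNbhdC X).card +
      (D.blocks.filter fun B => ¬ ∃ q ∈ X, q ∉ B).card = D.blocks.card :=
    Finset.card_filter_add_card_filter_not _
  rw [D.card_blocks] at h3
  omega

/-- If `Y` has more than `r` blocks, every point is missed by some block of `Y`. -/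
lemma aux_pointNbhdC_full (D : TwoDesign α) {Y : Finset (Finset α)}
    (hY : Y ⊆ D.blocks) (hy : D.r < Y.card) :
    D.pointNbhdC Y = D.points := by
  unfold TwoDesign.pointNbhdC
  rw [Finset.filter_eq_self]
  intro p hp
  by_contra hcon
  push_neg at hcon
  have hsub : Y ⊆ D.blocks.filter fun B => p ∈ B := by
    intro B hB
    exact Finset.mem_filter.mpr ⟨hY hB, hcon B hB⟩
  have := Finset.card_le_card hsub
  rw [D.point_count p hp] at this
  omega

end AuxLemmas

set_option maxHeartbeats 1000000 in
theorem iso_noninc_order_ge_three (n : ℕ) (hn : 3 ≤ n) (D : TwoDesign α)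
    (hU : D.IsUnital n) :
    isoNonInc D = 2 * ((n : ℝ) ^ 3 + 1) / ((n : ℝ) ^ 2 * ((n : ℝ) ^ 2 + 1)) := by
  obtain ⟨hv, hb, hr, hk, hl⟩ := hU
  have hn0 : 0 < n := by omega
  -- ladder of power inequalities
  have L0 : 3 * n ≤ n ^ 2 := by
    calc 3 * n ≤ n * n := Nat.mul_le_mul_right _ hn
      _ = n ^ 2 := by ring
  have L0 : 3 * n ^ 1 ≤ n ^ 2 := by
    calc 3 * n ^ 1 ≤ n * n ^ 1 := Nat.mul_le_mul_right _ hn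
      _ = n ^ 2 := by ring
  have L1 : 3 * n ^ 2 ≤ n ^ 3 := by
    calc 3 * n ^ 2 ≤ n * n ^ 2 := Nat.mul_le_mul_right _ hn
      _ = n ^ 3 := by ring
  have L2 : 3 * n ^ 3 ≤ n ^ 4 := by
    calc 3 * n ^ 3 ≤ n * n ^ 3 := Nat.mul_le_mul_right _ hn
      _ = n ^ 4 := by ring
  have L3 : 3 * n ^ 4 ≤ n ^ 5 := by
    calc 3 * n ^ 4 ≤ n * n ^ 4 := Nat.mul_le_mul_right _ hn
      _ = n ^ 5 := by ring
  have L4 : 3 * n ^ 5 ≤ n ^ 6 := by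
    calc 3 * n ^ 5 ≤ n * n ^ 5 := Nat.mul_le_mul_right _ hn
      _ = n ^ 6 := by ring
  have L5 : 3 * n ^ 6 ≤ n ^ 7 := by
    calc 3 * n ^ 6 ≤ n * n ^ 6 := Nat.mul_le_mul_right _ hn
      _ = n ^ 7 := by ring
  have L6 : 3 * n ^ 7 ≤ n ^ 8 := by
    calc 3 * n ^ 7 ≤ n * n ^ 7 := Nat.mul_le_mul_right _ hn
      _ = n ^ 8 := by ring
  have hsub34 : n ^ 4 - n ^ 3 + n ^ 3 = n ^ 4 := by
    have : n ^ 3 ≤ n ^ 4 := by omega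
    omega
  have h34 : n ^ 3 ≤ n ^ 4 := by omega
  have hvb : D.v + D.b = n ^ 4 + n ^ 2 + 1 := by rw [hv, hb]; omega
  obtain ⟨m, hm⟩ : Even (n ^ 4 + n ^ 2) := by
    have he : n ^ 4 + n ^ 2 = n ^ 2 * (n ^ 2 + 1) := by ring
    rw [he]; exact Nat.even_mul_succ_self _
  have hm2 : 2 * m = n ^ 4 + n ^ 2 := by omega
  set c : ℝ := 2 * ((n : ℝ) ^ 3 + 1) / ((n : ℝ) ^ 2 * ((n : ℝ) ^ 2 + 1)) with hc
  have hnpos : (0 : ℝ) < (n : ℝ) := by exact_mod_cast hn0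
  have hdpos : (0 : ℝ) < (n : ℝ) ^ 2 * ((n : ℝ) ^ 2 + 1) :=
    mul_pos (pow_pos hnpos 2) (by positivity)
  -- Lower bound: `c` is a lower bound for the defining set.
  have hlb : ∀ t ∈ { t : ℝ | ∃ X ⊆ D.points, ∃ Y ⊆ D.blocks,
      0 < X.card + Y.card ∧ 2 * (X.card + Y.card) ≤ D.v + D.b ∧
      t = (((D.pointNbhdC Y \ X).card + (D.blockNbhdC X \ Y).card : ℕ) : ℝ) /
          ((X.card + Y.card : ℕ) : ℝ) }, c ≤ t := by
    rintro t ⟨X, hX, Y, hY, hpos, hle, rfl⟩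
    set x := X.card with hxdef
    set y := Y.card with hydef
    set Np := (D.pointNbhdC Y \ X).card with hNpdef
    set Nb := (D.blockNbhdC X \ Y).card with hNbdef
    have hxv : x ≤ n ^ 3 + 1 := by
      rw [← hv, ← D.card_points]; exact Finset.card_le_card hX
    rw [hvb] at hle
    have hs : x + y ≤ m := by omega
    have key : 2 * (n ^ 3 + 1) * (x + y) ≤ (Np + Nb) * (n ^ 4 + n ^ 2) := by
      have hNbsd : (D.blockNbhdC X).card ≤ Nb + y :=
        Finset.card_le_card_sdiff_add_card
      have hNpsd : (D.pointNbhdC Y).card ≤ Np + x :=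
        Finset.card_le_card_sdiff_add_card
      rcases Nat.lt_or_ge (n ^ 2) y with hybig | hysmall
      · -- Y large: every point is a neighbour
        have hfull : D.pointNbhdC Y = D.points := by
          apply aux_pointNbhdC_full D hY; omega
        have hNp1 : n ^ 3 + 1 ≤ Np + x := by
          rw [hfull, D.card_points, hv] at hNpsd; exact hNpsd
        rcases Nat.eq_zero_or_pos x with hx0 | hx1
        · have hNpv : n ^ 3 + 1 ≤ Np := by omega
          calc 2 * (n ^ 3 + 1) * (x + y) ≤ 2 * (n ^ 3 + 1) * m :=
                Nat.mul_le_mul_left _ hs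
            _ = (n ^ 3 + 1) * (2 * m) := by ring
            _ = (n ^ 3 + 1) * (n ^ 4 + n ^ 2) := by rw [hm2]
            _ ≤ (Np + Nb) * (n ^ 4 + n ^ 2) :=
                Nat.mul_le_mul_right _ (by omega)
        · have hXne : X.Nonempty := Finset.card_pos.mp hx1
          have hB := aux_blockNbhdC_large D hX hXne
          rw [hb, hr] at hB
          have hN : n ^ 4 + 1 ≤ Np + Nb + (x + y) := by omega
          have hNge : n ^ 3 + 1 ≤ Np + Nb := by omega
          calc 2 * (n ^ 3 + 1) * (x + y) ≤ 2 * (n ^ 3 + 1) * m :=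
                Nat.mul_le_mul_left _ hs
            _ = (n ^ 3 + 1) * (2 * m) := by ring
            _ = (n ^ 3 + 1) * (n ^ 4 + n ^ 2) := by rw [hm2]
            _ ≤ (Np + Nb) * (n ^ 4 + n ^ 2) := Nat.mul_le_mul_right _ hNge
      · rcases Nat.eq_zero_or_pos x with hx0 | hx1
        · -- X empty, Y small but nonempty
          have hy1 : 0 < y := by omega
          obtain ⟨B₀, hB₀⟩ := Finset.card_pos.mp hy1
          have hB₀b : B₀ ∈ D.blocks := hY hB₀
          have hsub : D.points \ B₀ ⊆ D.pointNbhdC Y := by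
            intro p hp
            rw [Finset.mem_sdiff] at hp
            exact Finset.mem_filter.mpr ⟨hp.1, B₀, hB₀, hp.2⟩
          have hcard : (D.points \ B₀).card = n ^ 3 + 1 - (n + 1) := by
            rw [Finset.card_sdiff_of_subset (D.block_subset B₀ hB₀b), D.card_points, hv,
              D.card_block B₀ hB₀b, hk]
          have h5 : n ^ 3 + 1 - (n + 1) ≤ Np + x := by
            calc n ^ 3 + 1 - (n + 1) = (D.points \ B₀).card := hcard.symm
              _ ≤ (D.pointNbhdC Y).card := Finset.card_le_card hsub
              _ ≤ Np + x := hNpsd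
          have h6 : n ^ 3 ≤ Np + n := by omega
          have hexp : (Np + n) * (n ^ 4 + n ^ 2) =
              Np * (n ^ 4 + n ^ 2) + n * (n ^ 4 + n ^ 2) := by ring
          have hge : n ^ 3 * (n ^ 4 + n ^ 2) ≤ (Np + n) * (n ^ 4 + n ^ 2) :=
            Nat.mul_le_mul_right _ h6
          have hpoly : 2 * (n ^ 3 + 1) * n ^ 2 + n * (n ^ 4 + n ^ 2) ≤
              n ^ 3 * (n ^ 4 + n ^ 2) := by
            have e : n * (n ^ 4 + n ^ 2) = n ^ 5 + n ^ 3 := by ring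
            have e' : n ^ 3 * (n ^ 4 + n ^ 2) = n ^ 7 + n ^ 5 := by ring
            have e'' : 2 * (n ^ 3 + 1) * n ^ 2 = 2 * n ^ 5 + 2 * n ^ 2 := by
              ring
            rw [e, e', e'']
            omega
          have hmid : 2 * (n ^ 3 + 1) * n ^ 2 ≤ Np * (n ^ 4 + n ^ 2) := by
            linarith [hexp, hge, hpoly]
          calc 2 * (n ^ 3 + 1) * (x + y) ≤ 2 * (n ^ 3 + 1) * n ^ 2 :=
                Nat.mul_le_mul_left _ (by omega)
            _ ≤ Np * (n ^ 4 + n ^ 2) := hmid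
            _ ≤ (Np + Nb) * (n ^ 4 + n ^ 2) :=
                Nat.mul_le_mul_right _ (Nat.le_add_right _ _)
        · -- X nonempty, Y small
          have hXne : X.Nonempty := Finset.card_pos.mp hx1
          have hB := aux_blockNbhdC_large D hX hXne
          rw [hb, hr] at hB
          have hNb2 : n ^ 4 ≤ Nb + n ^ 2 + n ^ 3 := by omega
          have hexp : (Nb + n ^ 2 + n ^ 3) * (n ^ 4 + n ^ 2) =
              Nb * (n ^ 4 + n ^ 2) + (n ^ 2 + n ^ 3) * (n ^ 4 + n ^ 2) := by
            ring
          have hge : n ^ 4 * (n ^ 4 + n ^ 2) ≤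
              (Nb + n ^ 2 + n ^ 3) * (n ^ 4 + n ^ 2) :=
            Nat.mul_le_mul_right _ hNb2
          have hpoly : 2 * (n ^ 3 + 1) * (n ^ 3 + n ^ 2 + 1) +
              (n ^ 2 + n ^ 3) * (n ^ 4 + n ^ 2) ≤ n ^ 4 * (n ^ 4 + n ^ 2) := by
            have e : 2 * (n ^ 3 + 1) * (n ^ 3 + n ^ 2 + 1) =
                2 * n ^ 6 + 2 * n ^ 5 + 4 * n ^ 3 + 2 * n ^ 2 + 2 := by ring
            have e' : (n ^ 2 + n ^ 3) * (n ^ 4 + n ^ 2) =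
                n ^ 7 + n ^ 6 + n ^ 5 + n ^ 4 := by ring
            have e'' : n ^ 4 * (n ^ 4 + n ^ 2) = n ^ 8 + n ^ 6 := by ring
            rw [e, e', e'']
            omega
          have hmid : 2 * (n ^ 3 + 1) * (n ^ 3 + n ^ 2 + 1) ≤
              Nb * (n ^ 4 + n ^ 2) := by linarith [hexp, hge, hpoly]
          calc 2 * (n ^ 3 + 1) * (x + y) ≤
                2 * (n ^ 3 + 1) * (n ^ 3 + n ^ 2 + 1) :=
                Nat.mul_le_mul_left _ (by omega)
            _ ≤ Nb * (n ^ 4 + n ^ 2) := hmid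
            _ ≤ (Np + Nb) * (n ^ 4 + n ^ 2) :=
                Nat.mul_le_mul_right _ (by omega)
    -- pass to the reals
    have hspos : (0 : ℝ) < ((x + y : ℕ) : ℝ) := by exact_mod_cast hpos
    rw [hc, div_le_div_iff₀ hdpos hspos]
    have keyR : 2 * ((n : ℝ) ^ 3 + 1) * ((x : ℝ) + (y : ℝ)) ≤
        ((Np : ℝ) + (Nb : ℝ)) * ((n : ℝ) ^ 4 + (n : ℝ) ^ 2) := by
      exact_mod_cast key
    push_cast
    linarith [keyR]
  -- Membership: the bound is attained.
  have hmb : m ≤ D.blocks.card := by rw [D.card_blocks, hb]; omega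
  obtain ⟨Y, hYsub, hYcard⟩ := Finset.exists_subset_card_eq hmb
  have hmn2 : n ^ 2 < m := by omega
  have hfull : D.pointNbhdC Y = D.points := by
    apply aux_pointNbhdC_full D hYsub; rw [hr, hYcard]; exact hmn2
  have hBempty : D.blockNbhdC (∅ : Finset α) = ∅ := by
    simp [TwoDesign.blockNbhdC]
  have hmem : c ∈ { t : ℝ | ∃ X ⊆ D.points, ∃ Y ⊆ D.blocks,
      0 < X.card + Y.card ∧ 2 * (X.card + Y.card) ≤ D.v + D.b ∧
      t = (((D.pointNbhdC Y \ X).card + (D.blockNbhdC X \ Y).card : ℕ) : ℝ) /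
          ((X.card + Y.card : ℕ) : ℝ) } := by
    refine ⟨∅, Finset.empty_subset _, Y, hYsub, ?_, ?_, ?_⟩
    · simp [hYcard]; omega
    · rw [hvb]; simp [hYcard]; omega
    · rw [Finset.sdiff_empty, hBempty, Finset.empty_sdiff, hfull,
        D.card_points, hv, hYcard, Finset.card_empty, hc]
      have hmR : (m : ℝ) * 2 = (n : ℝ) ^ 4 + (n : ℝ) ^ 2 := by
        exact_mod_cast (by omega : m * 2 = n ^ 4 + n ^ 2)
      have hmpos : (0 : ℝ) < (m : ℝ) := by
        have h0 : 0 < m := by omega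
        exact_mod_cast h0
      push_cast
      simp only [Finset.card_empty, Nat.cast_zero]
      rw [div_eq_div_iff (ne_of_gt hdpos)
        (ne_of_gt (show (0:ℝ) < 0 + (m:ℝ) by linarith))]
      linear_combination ((n:ℝ) ^ 3 + 1) * hmR
  unfold isoNonInc
  exact le_antisymm (csInf_le ⟨c, hlb⟩ hmem) (le_csInf ⟨c, hmem⟩ hlb)
end

section
/- Let U = (P, 𝓑) be a unital of order n ≥ 2 with incidence graph G, and let S be a nonempty set of vertices of G with |S| ≤ |V(G)|/2. Put X = S ∩ P, Y = S ∩ 𝓑, x = |X|, y = |Y|, x' = |N(Y) \ X|, y' = |N(X) \ Y|. If x ≤ (n+1)²/4 and f(x,y)/(x+y) ≥ 2(n³ + 1 − ⌊c(n)⌋)/(n⁴ + n²), then (x' + y')/(x + y) ≥ 2(n³ + 1 − ⌊c(n)⌋)/(n²(n² + 1)). -/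
open Finset

variable {α : Type*} [DecidableEq α]

/-- `f(x,y) = (4x/(n+1)²)(n³+1) + (1 - 4x/(n+1)²)·n²(n+1)y/(n²(n-1)+y) - x`. -/
noncomputable def fFun (n : ℕ) (x y : ℝ) : ℝ :=
  4 * x / ((n : ℝ) + 1) ^ 2 * ((n : ℝ) ^ 3 + 1) +
    (1 - 4 * x / ((n : ℝ) + 1) ^ 2) *
      ((n : ℝ) ^ 2 * ((n : ℝ) + 1) * y / ((n : ℝ) ^ 2 * ((n : ℝ) - 1) + y)) - x


set_option maxHeartbeats 2000000

section Aux

variable {α : Type*} [DecidableEq α]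

private lemma card_inter_eq_sum (B M : Finset α) :
    (B ∩ M).card = ∑ p ∈ M, if p ∈ B then 1 else 0 := by
  rw [Finset.inter_comm, ← Finset.filter_mem_eq_inter, Finset.card_filter]

private lemma TD.sum_inter (D : TwoDesign α) (M : Finset α) (hM : M ⊆ D.points) :
    ∑ B ∈ D.blocks, (B ∩ M).card = M.card * D.r := by
  calc ∑ B ∈ D.blocks, (B ∩ M).card
      = ∑ B ∈ D.blocks, ∑ p ∈ M, if p ∈ B then 1 else 0 :=
        Finset.sum_congr rfl fun B _ => card_inter_eq_sum B M
    _ = ∑ p ∈ M, ∑ B ∈ D.blocks, if p ∈ B then 1 else 0 := Finset.sum_comm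
    _ = ∑ p ∈ M, D.r := by
        refine Finset.sum_congr rfl fun p hp => ?_
        rw [← Finset.card_filter]
        exact D.point_count p (hM hp)
    _ = M.card * D.r := by rw [Finset.sum_const, smul_eq_mul]

private lemma TD.sum_inter_offDiag (D : TwoDesign α) (M : Finset α) (hM : M ⊆ D.points) :
    ∑ B ∈ D.blocks, ((B ∩ M).offDiag).card = M.offDiag.card * D.lam := by
  have h1 : ∀ B : Finset α, (B ∩ M).offDiag
      = M.offDiag.filter (fun z => z.1 ∈ B ∧ z.2 ∈ B) := by
    intro B; ext ⟨a, c⟩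
    simp only [Finset.mem_offDiag, Finset.mem_inter, Finset.mem_filter]
    tauto
  calc ∑ B ∈ D.blocks, ((B ∩ M).offDiag).card
      = ∑ B ∈ D.blocks, ∑ z ∈ M.offDiag, if z.1 ∈ B ∧ z.2 ∈ B then 1 else 0 := by
        refine Finset.sum_congr rfl fun B _ => ?_
        rw [h1 B, Finset.card_filter]
    _ = ∑ z ∈ M.offDiag, ∑ B ∈ D.blocks, if z.1 ∈ B ∧ z.2 ∈ B then 1 else 0 :=
        Finset.sum_comm
    _ = ∑ z ∈ M.offDiag, D.lam := by
        refine Finset.sum_congr rfl fun z hz => ?_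
        rw [← Finset.card_filter]
        rw [Finset.mem_offDiag] at hz
        exact D.pair_count z.1 (hM hz.1) z.2 (hM hz.2.1) hz.2.2
    _ = M.offDiag.card * D.lam := by rw [Finset.sum_const, smul_eq_mul]

private lemma TD.sum_through (D : TwoDesign α) (X : Finset α) (hX : X ⊆ D.points)
    {q : α} (hq : q ∈ D.points) (hqX : q ∉ X) :
    ∑ B ∈ D.blocks, (if q ∈ B then (B ∩ X).card else 0) = X.card * D.lam := by
  calc ∑ B ∈ D.blocks, (if q ∈ B then (B ∩ X).card else 0)
      = ∑ B ∈ D.blocks, ∑ p ∈ X, if p ∈ B ∧ q ∈ B then 1 else 0 := by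
        refine Finset.sum_congr rfl fun B _ => ?_
        by_cases h : q ∈ B
        · simp only [h, if_true, and_true]
          exact card_inter_eq_sum B X
        · simp [h]
    _ = ∑ p ∈ X, ∑ B ∈ D.blocks, if p ∈ B ∧ q ∈ B then 1 else 0 := Finset.sum_comm
    _ = ∑ p ∈ X, D.lam := by
        refine Finset.sum_congr rfl fun p hp => ?_
        rw [← Finset.card_filter]
        exact D.pair_count p (hX hp) q hq (fun h => hqX (h ▸ hp))
    _ = X.card * D.lam := by rw [Finset.sum_const, smul_eq_mul]

private lemma nat_le_mul_self (t : ℕ) : t ≤ t * t := by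
  cases t with
  | zero => exact le_rfl
  | succ k => exact Nat.le_mul_of_pos_left _ (Nat.succ_pos k)

end Aux

theorem lemma_two_case_one (n : ℕ) (hn : 2 ≤ n) (D : TwoDesign α) (hU : D.IsUnital n)
    (X : Finset α) (hX : X ⊆ D.points) (Y : Finset (Finset α)) (hY : Y ⊆ D.blocks)
    (hne : 0 < X.card + Y.card) (hhalf : 2 * (X.card + Y.card) ≤ D.v + D.b)
    (hx : (X.card : ℝ) ≤ ((n : ℝ) + 1) ^ 2 / 4)
    (hf : fFun n (X.card : ℝ) (Y.card : ℝ) / ((X.card : ℝ) + (Y.card : ℝ)) ≥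
      2 * ((n : ℝ) ^ 3 + 1 - (⌊cFun n⌋ : ℝ)) / ((n : ℝ) ^ 4 + (n : ℝ) ^ 2)) :
    (((D.pointNbhd Y \ X).card : ℝ) + ((D.blockNbhd X \ Y).card : ℝ)) /
        ((X.card : ℝ) + (Y.card : ℝ)) ≥
      2 * ((n : ℝ) ^ 3 + 1 - (⌊cFun n⌋ : ℝ)) / ((n : ℝ) ^ 2 * ((n : ℝ) ^ 2 + 1)) := by
  classical
  obtain ⟨hv, hb, hr, hk, hlam⟩ := hU
  set M : Finset α := D.pointNbhd Y with hMdef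
  have hMsub : M ⊆ D.points := Finset.filter_subset _ _
  have hBM : ∀ B ∈ Y, B ⊆ M := by
    intro B hB p hp
    exact Finset.mem_filter.2 ⟨D.block_subset B (hY hB) hp, ⟨B, hB, hp⟩⟩
  have hBcard : ∀ B ∈ Y, (B ∩ M).card = n + 1 := by
    intro B hB
    rw [Finset.inter_eq_left.2 (hBM B hB), D.card_block B (hY hB), hk]
  have hn0 : (0:ℕ) < n := by omega
  have hn2 : (2:ℝ) ≤ (n:ℝ) := by exact_mod_cast hn
  -- ℕ counting identities
  have hsum1 : ∑ B ∈ D.blocks, (B ∩ M).card = M.card * n ^ 2 := by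
    rw [TD.sum_inter D M hMsub, hr]
  have hsum2 : ∑ B ∈ D.blocks, ((B ∩ M).offDiag).card = M.offDiag.card := by
    rw [TD.sum_inter_offDiag D M hMsub, hlam, mul_one]
  have hsq : ∀ B : Finset α, (B ∩ M).card * (B ∩ M).card
      = ((B ∩ M).offDiag).card + (B ∩ M).card := by
    intro B
    rw [Finset.offDiag_card, Nat.sub_add_cancel (nat_le_mul_self _)]
  have hsum3 : ∑ B ∈ D.blocks, (B ∩ M).card * (B ∩ M).card
      = M.offDiag.card + M.card * n ^ 2 := by
    calc ∑ B ∈ D.blocks, (B ∩ M).card * (B ∩ M).card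
        = ∑ B ∈ D.blocks, (((B ∩ M).offDiag).card + (B ∩ M).card) :=
          Finset.sum_congr rfl fun B _ => hsq B
      _ = _ := by rw [Finset.sum_add_distrib, hsum1, hsum2]
  have hsplit1 : (∑ B ∈ D.blocks \ Y, (B ∩ M).card) + Y.card * (n + 1)
      = M.card * n ^ 2 := by
    rw [← hsum1, ← Finset.sum_sdiff hY]
    congr 1
    rw [Finset.sum_congr rfl (fun B hB => hBcard B hB), Finset.sum_const, smul_eq_mul]
  have hsplit2 : (∑ B ∈ D.blocks \ Y, (B ∩ M).card * (B ∩ M).card)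
      + Y.card * ((n + 1) * (n + 1)) = M.offDiag.card + M.card * n ^ 2 := by
    rw [← hsum3, ← Finset.sum_sdiff hY]
    congr 1
    rw [Finset.sum_congr rfl (fun B hB => by rw [hBcard B hB]), Finset.sum_const,
      smul_eq_mul]
  -- real versions
  have h34 : n ^ 3 ≤ n ^ 4 := Nat.pow_le_pow_right (by omega) (by omega)
  have hcardB : (D.blocks.card : ℝ) = (n:ℝ) ^ 4 - (n:ℝ) ^ 3 + (n:ℝ) ^ 2 := by
    rw [D.card_blocks, hb, Nat.cast_add, Nat.cast_sub h34]
    push_cast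
    ring
  have hyb : (Y.card : ℝ) ≤ (n:ℝ) ^ 4 - (n:ℝ) ^ 3 + (n:ℝ) ^ 2 := by
    rw [← hcardB]
    exact_mod_cast Finset.card_le_card hY
  have hcard_sdiff : (((D.blocks \ Y).card : ℕ) : ℝ)
      = ((n:ℝ) ^ 4 - (n:ℝ) ^ 3 + (n:ℝ) ^ 2) - (Y.card : ℝ) := by
    rw [Finset.card_sdiff_of_subset hY, Nat.cast_sub (Finset.card_le_card hY), hcardB]
  have hoff : (M.offDiag.card : ℝ) = (M.card:ℝ) * (M.card:ℝ) - (M.card:ℝ) := by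
    rw [Finset.offDiag_card, Nat.cast_sub (nat_le_mul_self _)]
    push_cast
    ring
  have hS1r : (∑ B ∈ D.blocks \ Y, ((B ∩ M).card : ℝ))
      = (M.card:ℝ) * (n:ℝ) ^ 2 - (Y.card:ℝ) * ((n:ℝ) + 1) := by
    have := congrArg (Nat.cast : ℕ → ℝ) hsplit1
    push_cast at this
    linarith
  have hS2r : (∑ B ∈ D.blocks \ Y, ((B ∩ M).card : ℝ) ^ 2)
      = (M.card:ℝ) * (M.card:ℝ) - (M.card:ℝ) + (M.card:ℝ) * (n:ℝ) ^ 2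
        - (Y.card:ℝ) * (((n:ℝ) + 1) * ((n:ℝ) + 1)) := by
    have h2 := congrArg (Nat.cast : ℕ → ℝ) hsplit2
    push_cast at h2
    have h3 : (∑ B ∈ D.blocks \ Y, ((B ∩ M).card : ℝ) ^ 2)
        = ∑ B ∈ D.blocks \ Y, ((B ∩ M).card : ℝ) * ((B ∩ M).card : ℝ) := by
      refine Finset.sum_congr rfl fun B _ => ?_
      ring
    rw [h3]
    linarith [hoff, h2]
  have hCS := Finset.sum_mul_sq_le_sq_mul_sq (D.blocks \ Y)
      (fun B => ((B ∩ M).card : ℝ)) (fun _ => (1:ℝ))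
  simp only [mul_one, one_pow, Finset.sum_const, nsmul_eq_mul] at hCS
  have hmle : M.card ≤ n ^ 3 + 1 := by
    have h := Finset.card_le_card hMsub
    rwa [D.card_points, hv] at h
  have hmr : (M.card : ℝ) ≤ (n:ℝ) ^ 3 + 1 := by exact_mod_cast hmle
  -- L1 : the covering bound
  have hL1 : (n:ℝ) ^ 2 * ((n:ℝ) + 1) * (Y.card:ℝ)
      ≤ (M.card:ℝ) * ((n:ℝ) ^ 2 * ((n:ℝ) - 1) + (Y.card:ℝ)) := by
    have hCS' : ((M.card:ℝ) * (n:ℝ) ^ 2 - (Y.card:ℝ) * ((n:ℝ) + 1)) ^ 2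
        ≤ ((M.card:ℝ) * (M.card:ℝ) - (M.card:ℝ) + (M.card:ℝ) * (n:ℝ) ^ 2
            - (Y.card:ℝ) * (((n:ℝ) + 1) * ((n:ℝ) + 1)))
          * ((((n:ℝ) ^ 4 - (n:ℝ) ^ 3 + (n:ℝ) ^ 2) - (Y.card:ℝ))) := by
      rw [← hS1r, ← hS2r, ← hcard_sdiff]
      exact hCS
    have hprod : 0 ≤ ((M.card:ℝ) * ((n:ℝ) ^ 2 * ((n:ℝ) - 1) + (Y.card:ℝ))
        - (n:ℝ) ^ 2 * ((n:ℝ) + 1) * (Y.card:ℝ)) * ((n:ℝ) ^ 3 + 1 - (M.card:ℝ)) := by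
      have hid : ((M.card:ℝ) * ((n:ℝ) ^ 2 * ((n:ℝ) - 1) + (Y.card:ℝ))
          - (n:ℝ) ^ 2 * ((n:ℝ) + 1) * (Y.card:ℝ)) * ((n:ℝ) ^ 3 + 1 - (M.card:ℝ))
          = ((M.card:ℝ) * (M.card:ℝ) - (M.card:ℝ) + (M.card:ℝ) * (n:ℝ) ^ 2
            - (Y.card:ℝ) * (((n:ℝ) + 1) * ((n:ℝ) + 1)))
          * ((((n:ℝ) ^ 4 - (n:ℝ) ^ 3 + (n:ℝ) ^ 2) - (Y.card:ℝ)))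
          - ((M.card:ℝ) * (n:ℝ) ^ 2 - (Y.card:ℝ) * ((n:ℝ) + 1)) ^ 2 := by
        ring
      linarith [hCS', hid]
    rcases lt_or_eq_of_le hmr with hlt | heq
    · by_contra hcon
      push_neg at hcon
      have hneg : (M.card:ℝ) * ((n:ℝ) ^ 2 * ((n:ℝ) - 1) + (Y.card:ℝ))
          - (n:ℝ) ^ 2 * ((n:ℝ) + 1) * (Y.card:ℝ) < 0 := by linarith
      have hpos : (0:ℝ) < (n:ℝ) ^ 3 + 1 - (M.card:ℝ) := by linarith
      have := mul_neg_of_neg_of_pos hneg hpos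
      linarith
    · have hGe : (M.card:ℝ) * ((n:ℝ) ^ 2 * ((n:ℝ) - 1) + (Y.card:ℝ))
          - (n:ℝ) ^ 2 * ((n:ℝ) + 1) * (Y.card:ℝ)
          = ((n:ℝ) ^ 2 - 1) * (((n:ℝ) ^ 4 - (n:ℝ) ^ 3 + (n:ℝ) ^ 2) - (Y.card:ℝ)) := by
        rw [heq]
        ring
      have h9 : (0:ℝ) ≤ ((n:ℝ) ^ 2 - 1)
          * (((n:ℝ) ^ 4 - (n:ℝ) ^ 3 + (n:ℝ) ^ 2) - (Y.card:ℝ)) :=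
        mul_nonneg (by nlinarith [hn2]) (by linarith [hyb])
      linarith [hGe, h9]
  -- L2 : blocks joining uncovered points to X
  set U : Finset α := D.points \ M with hUdef
  set Q : Finset α := U \ X with hQdef
  have hQsub : Q ⊆ D.points := fun a ha =>
    (Finset.mem_sdiff.1 ((Finset.mem_sdiff.1 ha).1)).1
  have hcount : ∑ B ∈ D.blocks, (B ∩ Q).card * (B ∩ X).card = Q.card * X.card := by
    calc ∑ B ∈ D.blocks, (B ∩ Q).card * (B ∩ X).card
        = ∑ B ∈ D.blocks, ∑ q ∈ Q, (if q ∈ B then (B ∩ X).card else 0) := by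
          refine Finset.sum_congr rfl fun B _ => ?_
          rw [← Finset.sum_filter, Finset.sum_const, smul_eq_mul,
            Finset.filter_mem_eq_inter, Finset.inter_comm]
      _ = ∑ q ∈ Q, ∑ B ∈ D.blocks, (if q ∈ B then (B ∩ X).card else 0) :=
          Finset.sum_comm
      _ = ∑ q ∈ Q, X.card := by
          refine Finset.sum_congr rfl fun q hq => ?_
          have hqX : q ∉ X := (Finset.mem_sdiff.1 hq).2
          rw [TD.sum_through D X hX (hQsub hq) hqX, hlam, mul_one]
      _ = Q.card * X.card := by rw [Finset.sum_const, smul_eq_mul]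
  have hsubS : D.blockNbhd X \ Y ⊆ D.blocks := fun B hB =>
    Finset.filter_subset _ _ (Finset.mem_sdiff.1 hB).1
  have hrestrict : ∑ B ∈ D.blockNbhd X \ Y, (B ∩ Q).card * (B ∩ X).card
      = ∑ B ∈ D.blocks, (B ∩ Q).card * (B ∩ X).card := by
    refine Finset.sum_subset hsubS fun B hB hnot => ?_
    rw [Finset.mem_sdiff] at hnot
    push_neg at hnot
    by_cases hBY : B ∈ Y
    · have hBQ : B ∩ Q = ∅ := by
        ext q
        simp only [Finset.mem_inter, Finset.notMem_empty, iff_false, not_and]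
        intro hqB hqQ
        exact (Finset.mem_sdiff.1 ((Finset.mem_sdiff.1 hqQ).1)).2 (hBM B hBY hqB)
      rw [hBQ]
      simp
    · have hBn : B ∉ D.blockNbhd X := fun h => hBY (hnot h)
      have hBX : B ∩ X = ∅ := by
        by_contra h
        obtain ⟨p, hp⟩ := Finset.nonempty_of_ne_empty h
        rw [Finset.mem_inter] at hp
        exact hBn (Finset.mem_filter.2 ⟨hB, p, hp.2, hp.1⟩)
      rw [hBX]
      simp
  have hbound : ∀ B ∈ D.blockNbhd X \ Y,
      ((B ∩ Q).card : ℝ) * ((B ∩ X).card : ℝ) ≤ ((n:ℝ) + 1) ^ 2 / 4 := by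
    intro B hB
    have hBb : B ∈ D.blocks := hsubS hB
    have hdisj : Disjoint (B ∩ Q) (B ∩ X) := by
      rw [Finset.disjoint_left]
      intro a ha h2
      exact (Finset.mem_sdiff.1 (Finset.mem_inter.1 ha).2).2 (Finset.mem_inter.1 h2).2
    have hsumc : (B ∩ Q).card + (B ∩ X).card ≤ n + 1 := by
      rw [← Finset.card_union_of_disjoint hdisj]
      calc ((B ∩ Q) ∪ (B ∩ X)).card ≤ B.card := Finset.card_le_card
            (Finset.union_subset Finset.inter_subset_left Finset.inter_subset_left)
        _ = n + 1 := by rw [D.card_block B hBb, hk]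
    have hsr : ((B ∩ Q).card : ℝ) + ((B ∩ X).card : ℝ) ≤ (n:ℝ) + 1 := by
      exact_mod_cast hsumc
    have hq0 : (0:ℝ) ≤ ((B ∩ Q).card : ℝ) := Nat.cast_nonneg _
    have hx0 : (0:ℝ) ≤ ((B ∩ X).card : ℝ) := Nat.cast_nonneg _
    nlinarith [sq_nonneg (((B ∩ Q).card : ℝ) - ((B ∩ X).card : ℝ)), hq0, hx0]
  have hQX : (Q.card : ℝ) * (X.card : ℝ)
      ≤ ((D.blockNbhd X \ Y).card : ℝ) * (((n:ℝ) + 1) ^ 2 / 4) := by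
    have h0 : (∑ B ∈ D.blockNbhd X \ Y, ((B ∩ Q).card : ℝ) * ((B ∩ X).card : ℝ))
        = (Q.card : ℝ) * (X.card : ℝ) := by
      have := congrArg (Nat.cast : ℕ → ℝ) (hrestrict.trans hcount)
      push_cast at this
      exact this
    have h1 := Finset.sum_le_card_nsmul (D.blockNbhd X \ Y)
      (fun B => ((B ∩ Q).card : ℝ) * ((B ∩ X).card : ℝ)) (((n:ℝ) + 1) ^ 2 / 4) hbound
    rw [nsmul_eq_mul] at h1
    linarith [h0, h1]
  -- partition identities
  have hmu : (M.card : ℝ) + (U.card : ℝ) = (n:ℝ) ^ 3 + 1 := by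
    have h1 : M.card + U.card = D.points.card := by
      rw [hUdef, Finset.card_sdiff_of_subset hMsub]
      have := Finset.card_le_card hMsub
      omega
    have h2 : (M.card + U.card : ℕ) = n ^ 3 + 1 := by rw [h1, D.card_points, hv]
    exact_mod_cast h2
  have hUX : U ∩ X = X \ M := by
    ext a
    simp only [Finset.mem_inter, Finset.mem_sdiff, hUdef]
    constructor
    · rintro ⟨⟨_, haM⟩, haX⟩
      exact ⟨haX, haM⟩
    · rintro ⟨haX, haM⟩
      exact ⟨⟨hX haX, haM⟩, haX⟩
  have hqr : (Q.card : ℝ) = (U.card : ℝ) - ((X \ M).card : ℝ) := by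
    have := Finset.card_sdiff_add_card_inter U X
    rw [hUX] at this
    have h2 : (Q.card : ℝ) + ((X \ M).card : ℝ) = (U.card : ℝ) := by
      exact_mod_cast this
    linarith
  have hx'card : ((M \ X).card : ℝ) = (M.card : ℝ) - ((X.card : ℝ) - ((X \ M).card : ℝ)) := by
    have h1 := Finset.card_sdiff_add_card_inter M X
    have h2 := Finset.card_sdiff_add_card_inter X M
    rw [Finset.inter_comm] at h2
    have h1' : ((M \ X).card : ℝ) + ((M ∩ X).card : ℝ) = (M.card : ℝ) := by
      exact_mod_cast h1
    have h2' : ((X \ M).card : ℝ) + ((M ∩ X).card : ℝ) = (X.card : ℝ) := by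
      exact_mod_cast h2
    linarith
  -- glue
  have hp1 : (0:ℝ) < ((n:ℝ) + 1) ^ 2 := by positivity
  have hA1 : 4 * (X.card : ℝ) / ((n:ℝ) + 1) ^ 2 ≤ 1 := by
    rw [div_le_one hp1]
    linarith [hx]
  have hA0 : (0:ℝ) ≤ 4 * (X.card : ℝ) / ((n:ℝ) + 1) ^ 2 := by positivity
  have hdpos : (0:ℝ) < (n:ℝ) ^ 2 * ((n:ℝ) - 1) + (Y.card : ℝ) := by
    have h0 : (0:ℝ) ≤ (Y.card : ℝ) := Nat.cast_nonneg _
    nlinarith [hn2]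
  have hGle : (n:ℝ) ^ 2 * ((n:ℝ) + 1) * (Y.card : ℝ)
      / ((n:ℝ) ^ 2 * ((n:ℝ) - 1) + (Y.card : ℝ)) ≤ (M.card : ℝ) := by
    rw [div_le_iff₀ hdpos]
    linarith [hL1]
  have h8 : 4 * (X.card : ℝ) / ((n:ℝ) + 1) ^ 2
      * ((U.card : ℝ) - ((X \ M).card : ℝ)) ≤ ((D.blockNbhd X \ Y).card : ℝ) := by
    have e1 : 4 * (X.card : ℝ) / ((n:ℝ) + 1) ^ 2 * ((U.card : ℝ) - ((X \ M).card : ℝ))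
        = ((Q.card : ℝ) * (X.card : ℝ)) * (4 / ((n:ℝ) + 1) ^ 2) := by
      rw [hqr]
      ring
    have e2 : (((D.blockNbhd X \ Y).card : ℝ) * (((n:ℝ) + 1) ^ 2 / 4))
        * (4 / ((n:ℝ) + 1) ^ 2) = ((D.blockNbhd X \ Y).card : ℝ) := by
      field_simp
    have := mul_le_mul_of_nonneg_right hQX (by positivity : (0:ℝ) ≤ 4 / ((n:ℝ) + 1) ^ 2)
    rw [e2] at this
    linarith [e1, this]
  have hur : (U.card : ℝ) = (n:ℝ) ^ 3 + 1 - (M.card : ℝ) := by linarith [hmu]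
  have t1 : (0:ℝ) ≤ (1 - 4 * (X.card : ℝ) / ((n:ℝ) + 1) ^ 2)
      * ((M.card : ℝ) - (n:ℝ) ^ 2 * ((n:ℝ) + 1) * (Y.card : ℝ)
        / ((n:ℝ) ^ 2 * ((n:ℝ) - 1) + (Y.card : ℝ))) :=
    mul_nonneg (by linarith) (by linarith [hGle])
  have t2 : (0:ℝ) ≤ (1 - 4 * (X.card : ℝ) / ((n:ℝ) + 1) ^ 2) * ((X \ M).card : ℝ) :=
    mul_nonneg (by linarith) (Nat.cast_nonneg _)
  have key : fFun n (X.card : ℝ) (Y.card : ℝ)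
      = ((M.card : ℝ) - (X.card : ℝ) + ((X \ M).card : ℝ))
        + (4 * (X.card : ℝ) / ((n:ℝ) + 1) ^ 2)
          * ((U.card : ℝ) - ((X \ M).card : ℝ))
        - (1 - 4 * (X.card : ℝ) / ((n:ℝ) + 1) ^ 2)
          * ((M.card : ℝ) - (n:ℝ) ^ 2 * ((n:ℝ) + 1) * (Y.card : ℝ)
            / ((n:ℝ) ^ 2 * ((n:ℝ) - 1) + (Y.card : ℝ)))
        - (1 - 4 * (X.card : ℝ) / ((n:ℝ) + 1) ^ 2) * ((X \ M).card : ℝ) := by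
    rw [fFun, hur]
    ring
  have hmain : fFun n (X.card : ℝ) (Y.card : ℝ)
      ≤ ((M \ X).card : ℝ) + ((D.blockNbhd X \ Y).card : ℝ) := by
    rw [key, hx'card]
    linarith [h8, t1, t2]
  have hxy : (0:ℝ) < (X.card : ℝ) + (Y.card : ℝ) := by
    have : (0:ℕ) < X.card + Y.card := hne
    exact_mod_cast this
  have hdiv : fFun n (X.card : ℝ) (Y.card : ℝ) / ((X.card : ℝ) + (Y.card : ℝ))
      ≤ (((M \ X).card : ℝ) + ((D.blockNbhd X \ Y).card : ℝ))
        / ((X.card : ℝ) + (Y.card : ℝ)) :=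
    (div_le_div_iff_of_pos_right hxy).mpr hmain
  have hden : (n:ℝ) ^ 2 * ((n:ℝ) ^ 2 + 1) = (n:ℝ) ^ 4 + (n:ℝ) ^ 2 := by ring
  rw [ge_iff_le, hden]
  exact le_trans hf hdiv
end

section
/- Let U = (P, 𝓑) be a unital of order n ≥ 2 with incidence graph G, and let S be a nonempty set of vertices of G with |S| ≤ |V(G)|/2. Put X = S ∩ P, Y = S ∩ 𝓑, x = |X|, y = |Y|, x' = |N(Y) \ X|, y' = |N(X) \ Y|. If x > (n+1)²/4 and x − (1 − (n+1)²/(4x))·y' < ⌊c(n)⌋ + 1, then (x' + y')/(x + y) ≥ 2(n³ + 1 − ⌊c(n)⌋)/(n²(n² + 1)). -/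
open Finset

variable {α : Type*} [DecidableEq α]

set_option maxHeartbeats 1000000 in
theorem lemma_two_case_two (n : ℕ) (hn : 2 ≤ n) (D : TwoDesign α) (hU : D.IsUnital n)
    (X : Finset α) (hX : X ⊆ D.points) (Y : Finset (Finset α)) (hY : Y ⊆ D.blocks)
    (hne : 0 < X.card + Y.card) (hhalf : 2 * (X.card + Y.card) ≤ D.v + D.b)
    (hx : (X.card : ℝ) > ((n : ℝ) + 1) ^ 2 / 4)
    (hyp : (X.card : ℝ) - (1 - ((n : ℝ) + 1) ^ 2 / (4 * (X.card : ℝ))) *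
        ((D.blockNbhd X \ Y).card : ℝ) < (⌊cFun n⌋ : ℝ) + 1) :
    (((D.pointNbhd Y \ X).card : ℝ) + ((D.blockNbhd X \ Y).card : ℝ)) /
        ((X.card : ℝ) + (Y.card : ℝ)) ≥
      2 * ((n : ℝ) ^ 3 + 1 - (⌊cFun n⌋ : ℝ)) / ((n : ℝ) ^ 2 * ((n : ℝ) ^ 2 + 1)) := by

  classical
  obtain ⟨hv, hb, hr, hk, hlam⟩ := hU
  set Z : Finset α := D.points \ (X ∪ D.pointNbhd Y) with hZdef
  set W : Finset (Finset α) := D.blockNbhd X \ Y with hWdef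
  -- Step 1: every point of Z reaches all of X via blocks of W
  have hstep1 : ∀ p ∈ Z, X.card ≤ ∑ B ∈ W.filter (fun B => p ∈ B), (B ∩ X).card := by
    intro p hp
    rw [hZdef, Finset.mem_sdiff, Finset.mem_union] at hp
    obtain ⟨hpP, hpnot⟩ := hp
    push_neg at hpnot
    obtain ⟨hpX, hpNY⟩ := hpnot
    have hsub : X ⊆ (W.filter (fun B => p ∈ B)).biUnion (fun B => B ∩ X) := by
      intro q hq
      have hq' : q ∈ D.points := hX hq
      have hpq : p ≠ q := fun h => hpX (h ▸ hq)
      have hcard := D.pair_count p hpP q hq' hpq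
      rw [hlam] at hcard
      have hne' : (D.blocks.filter fun B => p ∈ B ∧ q ∈ B).Nonempty := by
        rw [← Finset.card_pos, hcard]; norm_num
      obtain ⟨B, hB⟩ := hne'
      rw [Finset.mem_filter] at hB
      obtain ⟨hBbl, hpB, hqB⟩ := hB
      have hBW : B ∈ W := by
        rw [hWdef, Finset.mem_sdiff]
        refine ⟨?_, ?_⟩
        · rw [TwoDesign.blockNbhd, Finset.mem_filter]
          exact ⟨hBbl, q, hq, hqB⟩
        · intro hBY
          exact hpNY (by
            rw [TwoDesign.pointNbhd, Finset.mem_filter]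
            exact ⟨hpP, B, hBY, hpB⟩)
      exact Finset.mem_biUnion.2 ⟨B, Finset.mem_filter.2 ⟨hBW, hpB⟩,
        Finset.mem_inter.2 ⟨hqB, hq⟩⟩
    calc X.card ≤ _ := Finset.card_le_card hsub
      _ ≤ _ := Finset.card_biUnion_le
  -- Step 2: double counting
  have hswap : ∑ p ∈ Z, ∑ B ∈ W.filter (fun B => p ∈ B), (B ∩ X).card
      = ∑ B ∈ W, (B ∩ Z).card * (B ∩ X).card := by
    calc ∑ p ∈ Z, ∑ B ∈ W.filter (fun B => p ∈ B), (B ∩ X).card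
        = ∑ p ∈ Z, ∑ B ∈ W, if p ∈ B then (B ∩ X).card else 0 := by
          refine Finset.sum_congr rfl fun p _ => ?_
          rw [Finset.sum_filter]
      _ = ∑ B ∈ W, ∑ p ∈ Z, if p ∈ B then (B ∩ X).card else 0 := Finset.sum_comm
      _ = ∑ B ∈ W, (B ∩ Z).card * (B ∩ X).card := by
          refine Finset.sum_congr rfl fun B _ => ?_
          rw [← Finset.sum_filter, Finset.sum_const, smul_eq_mul]
          congr 1
          rw [Finset.inter_comm]
          simp [Finset.filter_mem_eq_inter]
  -- Step 3: per-block bound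
  have hblock : ∀ B ∈ W, 4 * ((B ∩ Z).card * (B ∩ X).card) ≤ (n + 1) ^ 2 := by
    intro B hBW
    have hBbl : B ∈ D.blocks := by
      have h1 := (Finset.mem_sdiff.1 hBW).1
      rw [TwoDesign.blockNbhd, Finset.mem_filter] at h1
      exact h1.1
    have hcardB : B.card = n + 1 := by rw [D.card_block B hBbl, hk]
    have hdisj : Disjoint (B ∩ Z) (B ∩ X) := by
      rw [Finset.disjoint_left]
      intro a ha ha'
      have haZ : a ∈ Z := (Finset.mem_inter.1 ha).2
      have haX : a ∈ X := (Finset.mem_inter.1 ha').2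
      rw [hZdef, Finset.mem_sdiff, Finset.mem_union] at haZ
      exact haZ.2 (Or.inl haX)
    have hsum : (B ∩ Z).card + (B ∩ X).card ≤ n + 1 := by
      rw [← Finset.card_union_of_disjoint hdisj]
      calc ((B ∩ Z) ∪ (B ∩ X)).card ≤ B.card := by
            apply Finset.card_le_card
            intro a ha
            rcases Finset.mem_union.1 ha with h | h
            · exact (Finset.mem_inter.1 h).1
            · exact (Finset.mem_inter.1 h).1
        _ = n + 1 := hcardB
    have h1 : ((B ∩ Z).card : ℤ) + ((B ∩ X).card : ℤ) ≤ (n : ℤ) + 1 := by exact_mod_cast hsum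
    have h2 : (4 : ℤ) * (((B ∩ Z).card : ℤ) * ((B ∩ X).card : ℤ)) ≤ ((n : ℤ) + 1) ^ 2 := by
      nlinarith [sq_nonneg (((B ∩ Z).card : ℤ) - ((B ∩ X).card : ℤ)),
        Int.ofNat_nonneg (B ∩ Z).card, Int.ofNat_nonneg (B ∩ X).card]
    exact_mod_cast h2
  -- Step 4: main counting inequality in ℕ
  have hmain : 4 * (X.card * Z.card) ≤ (D.blockNbhd X \ Y).card * (n + 1) ^ 2 := by
    calc 4 * (X.card * Z.card) = 4 * ∑ _p ∈ Z, X.card := by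
          rw [Finset.sum_const, smul_eq_mul, mul_comm X.card]
      _ ≤ 4 * ∑ p ∈ Z, ∑ B ∈ W.filter (fun B => p ∈ B), (B ∩ X).card :=
          Nat.mul_le_mul_left 4 (Finset.sum_le_sum hstep1)
      _ = ∑ B ∈ W, 4 * ((B ∩ Z).card * (B ∩ X).card) := by rw [hswap, Finset.mul_sum]
      _ ≤ ∑ _B ∈ W, (n + 1) ^ 2 := Finset.sum_le_sum hblock
      _ = (D.blockNbhd X \ Y).card * (n + 1) ^ 2 := by
          rw [Finset.sum_const, smul_eq_mul, hWdef]
  -- Step 5: points are covered by X, Z and N(Y)\X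
  have hcover : n ^ 3 + 1 ≤ X.card + Z.card + (D.pointNbhd Y \ X).card := by
    have hsub : D.points ⊆ X ∪ (Z ∪ (D.pointNbhd Y \ X)) := by
      intro p hp
      by_cases h1 : p ∈ X
      · exact Finset.mem_union_left _ h1
      by_cases h2 : p ∈ D.pointNbhd Y
      · exact Finset.mem_union_right _ (Finset.mem_union_right _ (Finset.mem_sdiff.2 ⟨h2, h1⟩))
      · refine Finset.mem_union_right _ (Finset.mem_union_left _ ?_)
        rw [hZdef, Finset.mem_sdiff, Finset.mem_union]
        exact ⟨hp, by tauto⟩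
    calc n ^ 3 + 1 = D.points.card := by rw [D.card_points, hv]
      _ ≤ (X ∪ (Z ∪ (D.pointNbhd Y \ X))).card := Finset.card_le_card hsub
      _ ≤ X.card + (Z ∪ (D.pointNbhd Y \ X)).card := Finset.card_union_le _ _
      _ ≤ X.card + (Z.card + (D.pointNbhd Y \ X).card) :=
          Nat.add_le_add_left (Finset.card_union_le _ _) _
      _ = X.card + Z.card + (D.pointNbhd Y \ X).card := by ring
  -- Move to the reals
  have hnR : (2 : ℝ) ≤ (n : ℝ) := by exact_mod_cast hn
  have hxpos : (0 : ℝ) < (X.card : ℝ) := by nlinarith [hx]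
  have hmainR : 4 * ((X.card : ℝ) * (Z.card : ℝ)) ≤
      ((D.blockNbhd X \ Y).card : ℝ) * ((n : ℝ) + 1) ^ 2 := by exact_mod_cast hmain
  have hcoverR : (n : ℝ) ^ 3 + 1 ≤ (X.card : ℝ) + (Z.card : ℝ) +
      ((D.pointNbhd Y \ X).card : ℝ) := by exact_mod_cast hcover
  have ht : (Z.card : ℝ) ≤ ((n : ℝ) + 1) ^ 2 * ((D.blockNbhd X \ Y).card : ℝ) /
      (4 * (X.card : ℝ)) := by
    rw [le_div_iff₀ (by positivity)]
    nlinarith [hmainR]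
  have hexp : (1 - ((n : ℝ) + 1) ^ 2 / (4 * (X.card : ℝ))) *
      ((D.blockNbhd X \ Y).card : ℝ) =
      ((D.blockNbhd X \ Y).card : ℝ) -
      ((n : ℝ) + 1) ^ 2 * ((D.blockNbhd X \ Y).card : ℝ) / (4 * (X.card : ℝ)) := by
    ring
  -- strict bound
  have hstrict : (n : ℝ) ^ 3 - (⌊cFun n⌋ : ℝ) <
      ((D.pointNbhd Y \ X).card : ℝ) + ((D.blockNbhd X \ Y).card : ℝ) := by
    rw [hexp] at hyp
    linarith [hcoverR, ht, hyp]
  -- integrality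
  have hint : (n : ℝ) ^ 3 + 1 - (⌊cFun n⌋ : ℝ) ≤
      ((D.pointNbhd Y \ X).card : ℝ) + ((D.blockNbhd X \ Y).card : ℝ) := by
    have h1 : ((n : ℤ) ^ 3 - ⌊cFun n⌋ : ℤ) <
        ((D.pointNbhd Y \ X).card + (D.blockNbhd X \ Y).card : ℤ) := by
      have := hstrict
      push_cast at this ⊢
      exact_mod_cast this
    have h2 : ((n : ℤ) ^ 3 - ⌊cFun n⌋ : ℤ) + 1 ≤
        ((D.pointNbhd Y \ X).card + (D.blockNbhd X \ Y).card : ℤ) := h1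
    have h3 : ((n : ℝ) ^ 3 - (⌊cFun n⌋ : ℝ)) + 1 ≤
        ((D.pointNbhd Y \ X).card : ℝ) + ((D.blockNbhd X \ Y).card : ℝ) := by
      exact_mod_cast h2
    linarith
  -- size bound
  have hvb : D.v + D.b = n ^ 4 + n ^ 2 + 1 := by
    have h34 : n ^ 3 ≤ n ^ 4 := Nat.pow_le_pow_right (by omega) (by omega)
    have h2 : n ^ 4 - n ^ 3 + n ^ 3 = n ^ 4 := Nat.sub_add_cancel h34
    rw [hv, hb]; omega
  have hsize : 2 * (X.card + Y.card) ≤ n ^ 4 + n ^ 2 := by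
    have hpar : 2 ∣ n ^ 4 + n ^ 2 := by
      have he : n ^ 4 + n ^ 2 = n ^ 2 * (n ^ 2 + 1) := by ring
      rw [he]
      exact (Nat.even_mul_succ_self (n ^ 2)).two_dvd
    rw [hvb] at hhalf; omega
  have hsizeR : 2 * ((X.card : ℝ) + (Y.card : ℝ)) ≤ (n : ℝ) ^ 4 + (n : ℝ) ^ 2 := by
    exact_mod_cast hsize
  -- floor bound
  have hsq : (3 : ℝ) ≤ Real.sqrt (8 * (n : ℝ) ^ 2 + 9) := by
    have h9 : Real.sqrt 9 = 3 := by
      rw [show (9 : ℝ) = 3 ^ 2 by norm_num, Real.sqrt_sq (by norm_num)]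
    rw [← h9]
    apply Real.sqrt_le_sqrt
    have h0 : (0 : ℝ) ≤ 8 * (n : ℝ) ^ 2 := by positivity
    linarith
  have hcle : (⌊cFun n⌋ : ℝ) ≤ (n : ℝ) ^ 2 := by
    have h1 : cFun n ≤ (n : ℝ) ^ 2 := by
      unfold cFun; linarith
    linarith [Int.floor_le (cFun n)]
  have hM : (0 : ℝ) ≤ (n : ℝ) ^ 3 + 1 - (⌊cFun n⌋ : ℝ) := by nlinarith
  -- finish
  have hxy : (0 : ℝ) < (X.card : ℝ) + (Y.card : ℝ) := by
    have : (0 : ℝ) < ((X.card + Y.card : ℕ) : ℝ) := by exact_mod_cast hne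
    push_cast at this; linarith
  have hden : (0 : ℝ) < (n : ℝ) ^ 2 * ((n : ℝ) ^ 2 + 1) := by nlinarith
  rw [ge_iff_le, div_le_div_iff₀ hden hxy]
  nlinarith [mul_le_mul_of_nonneg_left hsizeR hM,
    mul_le_mul_of_nonneg_right hint (le_of_lt hden), hM, hxy]
end

section
/- Let U be a unital of order n ≥ 2 with incidence graph G_U. If U contains a k-arc for some integer k with 3 ≤ k ≤ c(n), then i(G_U) ≤ 2(n³ + 1 − k)/(n²(n² + 1)). -/
open Finset

variable {α : Type*} [DecidableEq α]

lemma arc_count {α : Type*} [DecidableEq α] (D : TwoDesign α)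
    (X : Finset α) (hX : X ⊆ D.points) (harc : ∀ B ∈ D.blocks, (B ∩ X).card ≤ 2) :
    (D.blockNbhd X).card + X.card.choose 2 * D.lam = X.card * D.r := by
  have sum1 : ∑ B ∈ D.blocks, (B ∩ X).card = X.card * D.r := by
    have h1 : ∀ B ∈ D.blocks, (B ∩ X).card = ∑ p ∈ X, if p ∈ B then 1 else 0 := by
      intro B _
      rw [inter_comm, ← Finset.filter_mem_eq_inter, Finset.card_filter]
    calc ∑ B ∈ D.blocks, (B ∩ X).card
        = ∑ p ∈ X, ∑ B ∈ D.blocks, if p ∈ B then 1 else 0 := by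
          rw [← Finset.sum_comm]; exact Finset.sum_congr rfl h1
      _ = ∑ p ∈ X, D.r := Finset.sum_congr rfl (fun p hp => by
          rw [← Finset.card_filter]; exact D.point_count p (hX hp))
      _ = X.card * D.r := by rw [Finset.sum_const, smul_eq_mul]
  have sum2 : ∑ B ∈ D.blocks, ((B ∩ X).card).choose 2 = X.card.choose 2 * D.lam := by
    have h1 : ∀ B ∈ D.blocks, ((B ∩ X).card).choose 2
        = ∑ e ∈ X.powersetCard 2, if e ⊆ B then 1 else 0 := by
      intro B _
      rw [← Finset.card_powersetCard, ← Finset.card_filter]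
      congr 1
      ext e
      simp only [mem_powersetCard, mem_filter, subset_inter_iff]
      tauto
    calc ∑ B ∈ D.blocks, ((B ∩ X).card).choose 2
        = ∑ e ∈ X.powersetCard 2, ∑ B ∈ D.blocks, if e ⊆ B then 1 else 0 := by
          rw [← Finset.sum_comm]; exact Finset.sum_congr rfl h1
      _ = ∑ e ∈ X.powersetCard 2, D.lam := Finset.sum_congr rfl (fun e he => by
          rw [← Finset.card_filter]
          obtain ⟨heX, hecard⟩ := Finset.mem_powersetCard.mp he
          obtain ⟨p, q, hpq, rfl⟩ := Finset.card_eq_two.mp hecard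
          rw [show (D.blocks.filter fun B => ({p, q} : Finset α) ⊆ B)
              = D.blocks.filter fun B => p ∈ B ∧ q ∈ B from by
            apply Finset.filter_congr; intro B _; simp [Finset.insert_subset_iff]]
          exact D.pair_count p (hX (heX (by simp))) q (hX (heX (by simp))) hpq)
      _ = X.card.choose 2 * D.lam := by
          rw [Finset.sum_const, smul_eq_mul, Finset.card_powersetCard]
  have h3 : ∀ B ∈ D.blocks,
      (if ∃ p ∈ X, p ∈ B then 1 else 0) + ((B ∩ X).card).choose 2 = (B ∩ X).card := by
    intro B hB
    have h2 := harc B hB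
    by_cases h : ∃ p ∈ X, p ∈ B
    · have h1 : 1 ≤ (B ∩ X).card := Finset.card_pos.mpr (by
        obtain ⟨p, hpX, hpB⟩ := h; exact ⟨p, Finset.mem_inter.mpr ⟨hpB, hpX⟩⟩)
      rw [if_pos h]
      set c := (B ∩ X).card with hc
      interval_cases c <;> decide
    · have he : B ∩ X = ∅ := by
        rw [Finset.eq_empty_iff_forall_notMem]
        intro p hp
        exact h ⟨p, (Finset.mem_inter.mp hp).2, (Finset.mem_inter.mp hp).1⟩
      rw [if_neg h, he]
      simp
  have key : ∑ B ∈ D.blocks, ((if ∃ p ∈ X, p ∈ B then 1 else 0) + ((B ∩ X).card).choose 2)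
      = X.card * D.r := by rw [Finset.sum_congr rfl h3]; exact sum1
  rw [Finset.sum_add_distrib, sum2, ← Finset.card_filter] at key
  exact key

set_option maxHeartbeats 1000000 in
theorem iso_inc_upper_bound_of_arc (n k : ℕ) (hn : 2 ≤ n) (D : TwoDesign α)
    (hU : D.IsUnital n) (hk3 : 3 ≤ k) (hkc : (k : ℝ) ≤ cFun n)
    (X : Finset α) (hArc : D.IsArc X) (hk : X.card = k) :
    isoInc D ≤ 2 * ((n : ℝ) ^ 3 + 1 - (k : ℝ)) /
      ((n : ℝ) ^ 2 * ((n : ℝ) ^ 2 + 1)) := by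
  obtain ⟨hXP, _, harc⟩ := hArc
  obtain ⟨hv, hb, hr, hkk, hlam⟩ := hU
  set M := n ^ 2 * (n ^ 2 + 1) / 2 with hMdef
  have hM2 : 2 * M = n ^ 2 * (n ^ 2 + 1) :=
    Nat.mul_div_cancel' (Even.two_dvd (Nat.even_mul_succ_self _))
  have hM2' : 2 * M = n ^ 4 + n ^ 2 := by rw [hM2]; ring
  -- real inequalities from hkc
  have hsn : (0:ℝ) ≤ 8 * (n:ℝ) ^ 2 + 9 := by positivity
  have h9 : (3:ℝ) ≤ Real.sqrt (8 * (n:ℝ) ^ 2 + 9) := by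
    nlinarith [Real.sq_sqrt hsn, Real.sqrt_nonneg (8 * (n:ℝ) ^ 2 + 9)]
  unfold cFun at hkc
  have hkn2R : (k:ℝ) ≤ (n:ℝ) ^ 2 := by linarith
  have hkn2 : k ≤ n ^ 2 := by exact_mod_cast hkn2R
  have hsq : 8 * (n:ℝ) ^ 2 + 9 ≤ (2 * ((n:ℝ) ^ 2 - k) + 3) ^ 2 := by
    have hs : Real.sqrt (8 * (n:ℝ) ^ 2 + 9) ≤ 2 * ((n:ℝ) ^ 2 - k) + 3 := by linarith
    nlinarith [Real.sq_sqrt hsn, Real.sqrt_nonneg (8 * (n:ℝ) ^ 2 + 9)]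
  -- the counting lemma
  have hcount := arc_count D X hXP harc
  rw [hk, hr, hlam, mul_one] at hcount
  -- 2 * choose 2
  have hC2 : 2 * k.choose 2 = k * (k - 1) := by
    rw [Nat.choose_two_right]
    exact Nat.mul_div_cancel' (Even.two_dvd (by
      have : k * (k - 1) = (k - 1) * ((k - 1) + 1) := by
        rw [Nat.sub_add_cancel (by omega)]; ring
      rw [this]; exact Nat.even_mul_succ_self _))
  -- key cardinality bound
  have hYM : (D.blockNbhd X).card + k ≤ M := by
    have h2 : 2 * ((D.blockNbhd X).card + k) ≤ 2 * M := by
      rw [hM2']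
      have hR : 2 * (((D.blockNbhd X).card : ℝ) + k) ≤ (n:ℝ) ^ 4 + (n:ℝ) ^ 2 := by
        have e1 : ((D.blockNbhd X).card : ℝ) + (k.choose 2 : ℝ) = k * (n:ℝ) ^ 2 := by
          exact_mod_cast hcount
        have e2 : 2 * (k.choose 2 : ℝ) = k * ((k:ℝ) - 1) := by
          have : ((2 * k.choose 2 : ℕ) : ℝ) = ((k * (k - 1) : ℕ) : ℝ) := by rw [hC2]
          push_cast [Nat.cast_sub (show 1 ≤ k by omega)] at this
          linarith
        nlinarith [hsq]
      exact_mod_cast hR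
    omega
  -- 2n^3 ≤ n^4 + n^2
  have h2n3 : 2 * n ^ 3 ≤ n ^ 4 + n ^ 2 := by
    have : (2 * (n:ℤ) ^ 3) ≤ (n:ℤ) ^ 4 + (n:ℤ) ^ 2 := by nlinarith [sq_nonneg ((n:ℤ) ^ 2 - n)]
    exact_mod_cast this
  have hb' : D.b + n ^ 3 = n ^ 4 + n ^ 2 := by
    rw [hb]
    have : n ^ 3 ≤ n ^ 4 := Nat.pow_le_pow_right (by omega) (by omega)
    omega
  have hMb : M - k ≤ D.blocks.card := by rw [D.card_blocks]; omega
  -- build Y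
  obtain ⟨Y, hYsub, hYB, hYcard⟩ := Finset.exists_subsuperset_card_eq
    (Finset.filter_subset _ D.blocks : D.blockNbhd X ⊆ D.blocks)
    (show (D.blockNbhd X).card ≤ M - k by omega) hMb
  have hcards : X.card + Y.card = M := by rw [hk, hYcard]; omega
  have hMpos : 0 < M := by omega
  have hkM : k ≤ M := by omega
  -- the candidate value
  set A := (D.pointNbhd Y \ X).card with hA
  have hBempty : D.blockNbhd X \ Y = ∅ := Finset.sdiff_eq_empty_iff_subset.mpr hYsub
  have hAle : A ≤ n ^ 3 + 1 - k := by
    have h1 : D.pointNbhd Y \ X ⊆ D.points \ X :=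
      Finset.sdiff_subset_sdiff (Finset.filter_subset _ _) (le_refl _)
    calc A ≤ (D.points \ X).card := Finset.card_le_card h1
      _ = n ^ 3 + 1 - k := by rw [Finset.card_sdiff_of_subset hXP, hk, D.card_points, hv]
  have hkv : k ≤ n ^ 3 + 1 := by
    have : n ^ 2 ≤ n ^ 3 := Nat.pow_le_pow_right (by omega) (by omega)
    omega
  -- membership
  have hmem : ((A + (D.blockNbhd X \ Y).card : ℕ) : ℝ) / ((X.card + Y.card : ℕ) : ℝ)
      ∈ { t : ℝ | ∃ X' ⊆ D.points, ∃ Y' ⊆ D.blocks,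
        0 < X'.card + Y'.card ∧ 2 * (X'.card + Y'.card) ≤ D.v + D.b ∧
        t = (((D.pointNbhd Y' \ X').card + (D.blockNbhd X' \ Y').card : ℕ) : ℝ) /
            ((X'.card + Y'.card : ℕ) : ℝ) } := by
    refine ⟨X, hXP, Y, hYB, ?_, ?_, rfl⟩
    · omega
    · rw [hcards, hv]; omega
  have hbdd : BddBelow { t : ℝ | ∃ X' ⊆ D.points, ∃ Y' ⊆ D.blocks,
        0 < X'.card + Y'.card ∧ 2 * (X'.card + Y'.card) ≤ D.v + D.b ∧
        t = (((D.pointNbhd Y' \ X').card + (D.blockNbhd X' \ Y').card : ℕ) : ℝ) /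
            ((X'.card + Y'.card : ℕ) : ℝ) } := by
    refine ⟨0, ?_⟩
    rintro t ⟨X', _, Y', _, _, _, rfl⟩
    exact div_nonneg (Nat.cast_nonneg _) (Nat.cast_nonneg _)
  have hle : isoInc D ≤ ((A + (D.blockNbhd X \ Y).card : ℕ) : ℝ) / ((X.card + Y.card : ℕ) : ℝ) := by
    rw [isoInc]; exact csInf_le hbdd hmem
  refine le_trans hle ?_
  rw [hBempty, Finset.card_empty, Nat.add_zero, hcards]
  have hden : ((n:ℝ) ^ 2 * ((n:ℝ) ^ 2 + 1)) = 2 * (M : ℝ) := by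
    have : ((2 * M : ℕ) : ℝ) = ((n ^ 2 * (n ^ 2 + 1) : ℕ) : ℝ) := by rw [hM2]
    push_cast at this
    linarith
  rw [hden, mul_div_mul_left _ _ (two_ne_zero)]
  have hMpos' : (0:ℝ) < (M:ℝ) := by exact_mod_cast hMpos
  have hAleR : (A:ℝ) ≤ (n:ℝ) ^ 3 + 1 - k := by
    have h := (Nat.cast_le (α := ℝ)).mpr hAle
    rw [Nat.cast_sub hkv] at h
    push_cast at h
    linarith
  exact (div_le_div_iff_of_pos_right hMpos').mpr hAleR
end

section
/- Let n ≥ 3 be an integer and define f(x,y) = (4x/(n+1)²)(n³+1) + (1 − 4x/(n+1)²)·n²(n+1)y/(n²(n−1)+y) − x for real x, y with y ≥ 0. Then for all real x, y with 0 ≤ x ≤ (n+1)²/4 and y ≥ (n⁴ − n³ + n²)/2, one has f(x,y) ≥ n²(n³ + 1)/(n² + n − 1); moreover n²(n³ + 1)/(n² + n − 1) ≥ n³ + 1 − ⌊c(n)⌋, where c(n) = n² − (√(8n² + 9) − 3)/2. -/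
theorem f_lower_bound_case_two (n : ℕ) (hn : 3 ≤ n) :
    (∀ x y : ℝ, 0 ≤ x → x ≤ ((n : ℝ) + 1) ^ 2 / 4 →
      y ≥ ((n : ℝ) ^ 4 - (n : ℝ) ^ 3 + (n : ℝ) ^ 2) / 2 →
      fFun n x y ≥ (n : ℝ) ^ 2 * ((n : ℝ) ^ 3 + 1) / ((n : ℝ) ^ 2 + (n : ℝ) - 1)) ∧
    (n : ℝ) ^ 2 * ((n : ℝ) ^ 3 + 1) / ((n : ℝ) ^ 2 + (n : ℝ) - 1) ≥
      (n : ℝ) ^ 3 + 1 - (⌊cFun n⌋ : ℝ) := by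
  have hN : (3 : ℝ) ≤ (n : ℝ) := by exact_mod_cast hn
  set N : ℝ := (n : ℝ) with hNdef
  have hD : (0 : ℝ) < N ^ 2 + N - 1 := by nlinarith
  set T : ℝ := N ^ 2 * (N ^ 3 + 1) / (N ^ 2 + N - 1) with hT
  constructor
  · intro x y hx0 hx1 hy
    have hd : (0 : ℝ) < N ^ 2 * (N - 1) + y := by nlinarith
    have hsq : (0 : ℝ) < (N + 1) ^ 2 := by nlinarith
    -- g ≥ T
    have hg : T ≤ N ^ 2 * (N + 1) * y / (N ^ 2 * (N - 1) + y) := by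
      rw [hT, div_le_div_iff₀ hD hd]
      nlinarith [mul_nonneg (by nlinarith : (0:ℝ) ≤ 2 * y - (N ^ 4 - N ^ 3 + N ^ 2))
        (mul_nonneg (sq_nonneg N) (by nlinarith : (0:ℝ) ≤ N ^ 2 - 1))]
    -- 4 (N³ + 1 - T) ≥ (N+1)²
    have hbr : (N + 1) ^ 2 / 4 ≤ N ^ 3 + 1 - T := by
      have : T ≤ N ^ 3 + 1 - (N + 1) ^ 2 / 4 := by
        rw [hT, div_le_iff₀ hD]
        nlinarith [sq_nonneg (N - 3), sq_nonneg N, mul_nonneg (by nlinarith : (0:ℝ) ≤ N - 3)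
          (by nlinarith : (0:ℝ) ≤ N ^ 3)]
      linarith
    have ha0 : 0 ≤ 4 * x / (N + 1) ^ 2 := by positivity
    have ha1 : 4 * x / (N + 1) ^ 2 ≤ 1 := by
      rw [div_le_one hsq]; linarith
    -- a * (N³+1-T) ≥ x
    have h2 : x ≤ 4 * x / (N + 1) ^ 2 * (N ^ 3 + 1 - T) := by
      have := mul_le_mul_of_nonneg_left hbr ha0
      calc x = 4 * x / (N + 1) ^ 2 * ((N + 1) ^ 2 / 4) := by
              field_simp
        _ ≤ 4 * x / (N + 1) ^ 2 * (N ^ 3 + 1 - T) := this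
    -- (1-a) * (g - T) ≥ 0
    have h1 : 0 ≤ (1 - 4 * x / (N + 1) ^ 2) *
        (N ^ 2 * (N + 1) * y / (N ^ 2 * (N - 1) + y) - T) :=
      mul_nonneg (by linarith) (by linarith)
    show fFun n x y ≥ T
    unfold fFun
    rw [← hNdef]
    nlinarith [h1, h2]
  · -- floor bound
    have hsqrt : Real.sqrt (8 * N ^ 2 + 9) ≤ 4 * N - 3 := by
      have h1 : Real.sqrt (8 * N ^ 2 + 9) ≤ Real.sqrt ((4 * N - 3) ^ 2) :=
        Real.sqrt_le_sqrt (by nlinarith)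
      rwa [Real.sqrt_sq (by linarith)] at h1
    have hfloor : ((n : ℤ) ^ 2 - 2 * n + 3 : ℤ) ≤ ⌊cFun n⌋ := by
      apply Int.le_floor.mpr
      unfold cFun
      push_cast
      rw [← hNdef]
      nlinarith [hsqrt]
    have hfloorR : N ^ 2 - 2 * N + 3 ≤ (⌊cFun n⌋ : ℝ) := by
      rw [hNdef]
      exact_mod_cast hfloor
    have hTge : N ^ 3 + 1 - (N ^ 2 - 2 * N + 3) ≤ T := by
      rw [hT, le_div_iff₀ hD]
      nlinarith
    linarith
end
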